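/- arXiv:0910.2907 — 10 statements merged into one kernel-verified Lean document; each statement's English description precedes it below -/
import Mathlib

section
/- For every integer n ≥ 1, the 2-adic valuation of the n-th Fibonacci number satisfies: ν₂(F_n) = ν₂(n) + 2 if n ≡ 0 (mod 6); ν₂(F_n) = 1 if n ≡ 3 (mod 6); and ν₂(F_n) = 0 if n ≡ 1, 2, 4, or 5 (mod 6). -/
open Nat

private lemma fib_mod8_add12 (n : ℕ) : fib (n + 12) % 8 = fib n % 8 := by
  induction n using Nat.twoStepInduction with
  | zero => decide
  | one => decide
  | more n h1 h2 =>
    rw [show n + 1 + 12 = n + 13 by omega] at h2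
    have e1 : fib (n + 14) = fib (n + 13) + fib (n + 12) := by
      rw [show n + 14 = (n + 12) + 2 by ring, fib_add_two,
        show n + 12 + 1 = n + 13 by ring, Nat.add_comm]
    have e2 : fib (n + 2) = fib (n + 1) + fib n := by rw [fib_add_two, Nat.add_comm]
    show fib (n + 2 + 12) % 8 = fib (n + 2) % 8
    rw [show n + 2 + 12 = n + 14 by omega]
    omega

private lemma fib_mod8_mul (k r : ℕ) : fib (12 * k + r) % 8 = fib r % 8 := by
  induction k with
  | zero => simp
  | succ k ih =>
    rw [show 12 * (k + 1) + r = (12 * k + r) + 12 by ring, fib_mod8_add12, ih]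

private lemma fib_mod8 (n : ℕ) : fib n % 8 = fib (n % 12) % 8 := by
  conv_lhs => rw [← Nat.div_add_mod n 12]
  exact fib_mod8_mul _ _

instance : Fact (Nat.Prime 2) := ⟨Nat.prime_two⟩

private lemma val_of_mod4 {x : ℕ} (h : x % 4 = 2) : padicValNat 2 x = 1 := by
  obtain ⟨y, hy, hodd⟩ : ∃ y, x = 2 * y ∧ y % 2 = 1 := ⟨x / 2, by omega, by omega⟩
  rw [hy, padicValNat.mul (by norm_num) (by omega), padicValNat_self,
    padicValNat.eq_zero_of_not_dvd (by omega)]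

private lemma val_of_mod8 {x : ℕ} (h : x % 8 = 4) : padicValNat 2 x = 2 := by
  obtain ⟨y, hy, hodd⟩ : ∃ y, x = 4 * y ∧ y % 2 = 1 := ⟨x / 4, by omega, by omega⟩
  rw [hy, show (4:ℕ) = 2^2 by norm_num,
    padicValNat.mul (by norm_num) (by omega), padicValNat.prime_pow,
    padicValNat.eq_zero_of_not_dvd (by omega)]

private lemma val_odd {x : ℕ} (h : x % 2 = 1) : padicValNat 2 x = 0 :=
  padicValNat.eq_zero_of_not_dvd (by omega)

private lemma nu2_fib_six : ∀ n : ℕ, n % 6 = 0 → 1 ≤ n →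
    padicValNat 2 (fib n) = padicValNat 2 n + 2 := by
  intro n
  induction n using Nat.strong_induction_on with
  | _ n IH =>
    intro h6 hn
    obtain ⟨m, rfl, hm3⟩ : ∃ m, n = 2 * m ∧ 3 ≤ m := ⟨n / 2, by omega, by omega⟩
    rw [fib_two_mul]
    have hfm := fib_mod8 m
    have hfm1 := fib_mod8 (m + 1)
    have hmono : fib m ≤ fib (m + 1) := fib_le_fib_succ
    have hL : 2 * fib (m + 1) - fib m ≠ 0 := by
      have := fib_pos.mpr (show 0 < m by omega)
      omega
    have hfib0 : fib m ≠ 0 := (fib_pos.mpr (by omega)).ne'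
    rw [padicValNat.mul hfib0 hL]
    rcases (by omega : m % 12 = 0 ∨ m % 12 = 3 ∨ m % 12 = 6 ∨ m % 12 = 9) with h | h | h | h
    · -- m % 12 = 0
      rw [h] at hfm; rw [show (m+1) % 12 = 1 by omega] at hfm1
      have hv : fib m % 8 = 0 := by rw [hfm]; decide
      have hv1 : fib (m+1) % 8 = 1 := by rw [hfm1]; decide
      have hLv : padicValNat 2 (2 * fib (m + 1) - fib m) = 1 := val_of_mod4 (by omega)
      have hIH := IH m (by omega) (by omega) (by omega)
      have hval : padicValNat 2 (2 * m) = 1 + padicValNat 2 m := by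
        rw [padicValNat.mul (by norm_num) (by omega), padicValNat_self]
      omega
    · -- m % 12 = 3
      rw [h] at hfm; rw [show (m+1) % 12 = 4 by omega] at hfm1
      have hv : fib m % 8 = 2 := by rw [hfm]; decide
      have hv1 : fib (m+1) % 8 = 3 := by rw [hfm1]; decide
      have hLv : padicValNat 2 (2 * fib (m + 1) - fib m) = 2 := val_of_mod8 (by omega)
      have hfv : padicValNat 2 (fib m) = 1 := val_of_mod4 (by omega)
      have hval : padicValNat 2 (2 * m) = 1 := by
        rw [padicValNat.mul (by norm_num) (by omega), padicValNat_self, val_odd (by omega)]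
      omega
    · -- m % 12 = 6
      rw [h] at hfm; rw [show (m+1) % 12 = 7 by omega] at hfm1
      have hv : fib m % 8 = 0 := by rw [hfm]; decide
      have hv1 : fib (m+1) % 8 = 5 := by rw [hfm1]; decide
      have hLv : padicValNat 2 (2 * fib (m + 1) - fib m) = 1 := val_of_mod4 (by omega)
      have hIH := IH m (by omega) (by omega) (by omega)
      have hval : padicValNat 2 (2 * m) = 1 + padicValNat 2 m := by
        rw [padicValNat.mul (by norm_num) (by omega), padicValNat_self]
      omega
    · -- m % 12 = 9
      rw [h] at hfm; rw [show (m+1) % 12 = 10 by omega] at hfm1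
      have hv : fib m % 8 = 2 := by rw [hfm]; decide
      have hv1 : fib (m+1) % 8 = 7 := by rw [hfm1]; decide
      have hLv : padicValNat 2 (2 * fib (m + 1) - fib m) = 2 := val_of_mod8 (by omega)
      have hfv : padicValNat 2 (fib m) = 1 := val_of_mod4 (by omega)
      have hval : padicValNat 2 (2 * m) = 1 := by
        rw [padicValNat.mul (by norm_num) (by omega), padicValNat_self, val_odd (by omega)]
      omega

theorem nu2_fib (n : ℕ) (hn : 1 ≤ n) :
    (n % 6 = 0 → padicValNat 2 (Nat.fib n) = padicValNat 2 n + 2) ∧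
    (n % 6 = 3 → padicValNat 2 (Nat.fib n) = 1) ∧
    ((n % 6 = 1 ∨ n % 6 = 2 ∨ n % 6 = 4 ∨ n % 6 = 5) →
      padicValNat 2 (Nat.fib n) = 0) := by
  have hfm := fib_mod8 n
  refine ⟨fun h => nu2_fib_six n h hn, fun h => ?_, fun h => ?_⟩
  · rcases (by omega : n % 12 = 3 ∨ n % 12 = 9) with h' | h' <;> rw [h'] at hfm <;>
      refine val_of_mod4 ?_ <;>
      have hv : fib n % 8 = 2 := by rw [hfm]; decide
    all_goals omega
  · rcases (by omega : n % 12 = 1 ∨ n % 12 = 2 ∨ n % 12 = 4 ∨ n % 12 = 5 ∨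
        n % 12 = 7 ∨ n % 12 = 8 ∨ n % 12 = 10 ∨ n % 12 = 11) with
      h' | h' | h' | h' | h' | h' | h' | h' <;> rw [h'] at hfm <;>
      refine val_odd ?_ <;>
      [ (have hv : fib n % 8 = 1 := by rw [hfm]; decide);
        (have hv : fib n % 8 = 1 := by rw [hfm]; decide);
        (have hv : fib n % 8 = 3 := by rw [hfm]; decide);
        (have hv : fib n % 8 = 5 := by rw [hfm]; decide);
        (have hv : fib n % 8 = 5 := by rw [hfm]; decide);
        (have hv : fib n % 8 = 5 := by rw [hfm]; decide);
        (have hv : fib n % 8 = 7 := by rw [hfm]; decide);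
        (have hv : fib n % 8 = 1 := by rw [hfm]; decide)] <;> omega
end

section
/- For every integer n ≥ 1, the 5-adic valuation of the n-th Fibonacci number equals the 5-adic valuation of n: ν₅(F_n) = ν₅(n). -/
/-!
Writing `a = F_n` and `b = F_{n+1}`, the addition formulas give
`F_{5n} = a (25 a⁴ + 25 c a² + 5 c²)` with `c = b² - ab - a²`, and Cassini's identity says
`c = ±1`. Hence `F_{5n} = F_n · 5 · (5x + 1)`, so multiplying `n` by `5` raises `ν₅(F_n)` by
exactly one. At the bottom of the induction `5 ∤ n` gives `5 ∤ F_n`, because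
`gcd (F_5, F_n) = F_{gcd (5, n)} = F_1 = 1`.
-/

namespace Int

theorem fib_five_mul (n : ℤ) :
    fib (5 * n) = fib n * (25 * fib n ^ 4 + 25 * (-1) ^ n.natAbs * fib n ^ 2 + 5) := by
  have cassini := fib_succ_mul_fib_pred_sub_fib_sq n
  have sign_sq : ((-1 : ℤ) ^ n.natAbs) ^ 2 = 1 := by
    rw [← pow_mul, mul_comm, pow_mul, neg_one_sq, one_pow]
  have pred : fib (n - 1) = fib (n + 1) - fib n := by
    rw [fib_eq_fib_add_two_sub_fib_add_one, sub_add_cancel]; ring_nf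
  have quadruple : fib (4 * n) = fib (2 * n) * (2 * fib (2 * n + 1) - fib (2 * n)) := by
    rw [← fib_two_mul, ← mul_assoc]; norm_num
  have quadruple_succ : fib (4 * n + 1) = fib (2 * n + 1) ^ 2 + fib (2 * n) ^ 2 := by
    rw [← fib_two_mul_add_one, ← mul_assoc]; norm_num
  have quintuple : fib (5 * n) = fib (n - 1) * fib (4 * n) + fib n * fib (4 * n + 1) := by
    rw [← fib_add]; ring_nf
  rw [quintuple, quadruple, quadruple_succ, fib_two_mul, fib_two_mul_add_one, pred]
  rw [pred] at cassini
  set a := fib n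
  set b := fib (n + 1)
  set s : ℤ := (-1) ^ n.natAbs
  linear_combination (25 * a ^ 3 + 5 * a * (b * (b - a) - a ^ 2 + s)) * cassini + 5 * a * sign_sq

end Int

open Nat

lemma padicValInt_natCast_mul_add_one {p : ℕ} (hp : p ≠ 1) (x : ℤ) : padicValInt p (p * x + 1) = 0 := by
  refine padicValInt.eq_zero_of_not_dvd fun h => hp ?_
  have : (p : ℤ) ∣ 1 := (dvd_add_right (dvd_mul_right _ x)).mp h
  exact_mod_cast Int.eq_one_of_dvd_one (by positivity) this

lemma padicValNat_fib_five_mul {n : ℕ} (hn : n ≠ 0) :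
    padicValNat 5 (fib (5 * n)) = padicValNat 5 (fib n) + 1 := by
  have : Fact (Nat.Prime 5) := ⟨by norm_num⟩
  set x : ℤ := fib n ^ 4 + (-1) ^ n * fib n ^ 2
  have factor : (fib (5 * n) : ℤ) = fib n * (5 * (5 * x + 1)) := by
    rw [← Int.fib_natCast, Nat.cast_mul, Nat.cast_ofNat, Int.fib_five_mul, Int.natAbs_natCast,
      Int.fib_natCast]
    ring
  have hfib : (fib n : ℤ) ≠ 0 := by simpa using hn
  have hx : (5 : ℤ) * x + 1 ≠ 0 := by omega
  have h5 : padicValInt 5 5 = 1 := padicValInt_self (p := 5)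
  have hunit : padicValInt 5 (5 * x + 1) = 0 := padicValInt_natCast_mul_add_one (p := 5) (by norm_num) x
  rw [← padicValInt.of_nat, ← padicValInt.of_nat, factor, padicValInt.mul hfib (by simpa using hx),
    padicValInt.mul (by norm_num) hx, h5, hunit, add_zero]

lemma five_dvd_fib_iff {n : ℕ} : 5 ∣ fib n ↔ 5 ∣ n := by
  refine ⟨fun h => ?_, fib_dvd 5 n⟩
  by_contra hn
  have hcop : Nat.Coprime 5 n := (Nat.Prime.coprime_iff_not_dvd (by norm_num)).2 hn
  have hgcd : Nat.gcd 5 (fib n) = 1 := by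
    rw [← show fib 5 = 5 from rfl, ← fib_gcd, hcop.gcd_eq_one, fib_one]
  rw [Nat.gcd_eq_left h] at hgcd
  omega

lemma padicValNat_fib_five_pow_mul {m : ℕ} (hm : ¬ 5 ∣ m) (k : ℕ) :
    padicValNat 5 (fib (5 ^ k * m)) = k := by
  induction k with
  | zero => simpa using padicValNat.eq_zero_of_not_dvd (five_dvd_fib_iff.not.mpr hm)
  | succ k ih =>
    have hm0 : m ≠ 0 := by rintro rfl; exact hm (dvd_zero 5)
    rw [pow_succ', mul_assoc, padicValNat_fib_five_mul (by positivity), ih]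

theorem nu5_fib_general (n : ℕ) :
    padicValNat 5 (Nat.fib n) = padicValNat 5 n := by
  rcases eq_or_ne n 0 with rfl | hn
  · simp
  obtain ⟨k, m, hm, rfl⟩ := Nat.exists_eq_pow_mul_and_not_dvd hn 5 (by norm_num)
  have : Fact (Nat.Prime 5) := ⟨by norm_num⟩
  have hm0 : m ≠ 0 := by rintro rfl; exact hm (dvd_zero 5)
  rw [padicValNat_fib_five_pow_mul hm, padicValNat.mul (by positivity) hm0, padicValNat.prime_pow,
    padicValNat.eq_zero_of_not_dvd hm, add_zero]

theorem nu5_fib (n : ℕ) (hn : 1 ≤ n) :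
    padicValNat 5 (Nat.fib n) = padicValNat 5 n :=
  nu5_fib_general n
end

section
/- Let p be a prime with p ≠ 2 and p ≠ 5. For every integer n ≥ 1: if α(p) divides n, then ν_p(F_n) = ν_p(n) + ν_p(F_{α(p)}), and if α(p) does not divide n, then ν_p(F_n) = 0. -/
/-!
With `Q = !![1, 1; 1, 0]`, the entry `(Q ^ n) 0 1` is `F n` and `Q ^ n = F n • Q + F (n - 1) • 1`.
Expanding `Q ^ (n * k) = (F n • Q + F (n - 1) • 1) ^ k` binomially gives
`F (n k) = ∑ i, C(k, i) F(n)^i F(n-1)^(k-i) F(i)`. When the odd prime `p` divides `F n`, the term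
`i = 1`, namely `k F(n) F(n-1)^(k-1)`, has valuation `ν_p k + ν_p (F n)` (as `F (n - 1)` is prime to
`F n`), and every later term has a larger one; hence `ν_p (F (n k)) = ν_p (F n) + ν_p k`.

Over `ZMod p` the matrix `2 Q - 1` squares to `5`, and Frobenius sends it to `2 Q ^ p - 1`, so
`F p = 5 ^ ((p - 1) / 2) = ±1` there. Cassini's identity then gives `p ∣ F (p - 1) F (p + 1)`, so
`α(p)` exists, divides `p ± 1` and is prime to `p`; and since `gcd (F a) (F b) = F (gcd a b)`,
`p ∣ F n` exactly when `α(p) ∣ n`.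
-/

open Nat Finset

/-- The restricted period (rank of apparition) of the Fibonacci sequence modulo `p`:
the least positive `n` such that `p ∣ F n`. -/
noncomputable def fibAlpha (p : ℕ) : ℕ := sInf {n | 0 < n ∧ p ∣ Nat.fib n}

section FibMatrix

variable (R : Type*) [CommSemiring R]

def fibMatrix : Matrix (Fin 2) (Fin 2) R := !![1, 1; 1, 0]

theorem fibMatrix_pow_succ (n : ℕ) :
    fibMatrix R ^ (n + 1) = (fib (n + 1) : R) • fibMatrix R + (fib n : R) • 1 := by
  induction n with
  | zero => simp
  | succ n ih =>
    rw [pow_succ, ih]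
    ext i j
    fin_cases i <;> fin_cases j <;>
      simp [fibMatrix, Matrix.mul_apply, Matrix.one_apply, fib_add_two] <;> ring

theorem fibMatrix_pow_apply_zero_one (n : ℕ) : (fibMatrix R ^ n) 0 1 = fib n := by
  cases n with
  | zero => simp
  | succ n => rw [fibMatrix_pow_succ]; simp [fibMatrix]

end FibMatrix

theorem fib_succ_mul_eq_sum (n k : ℕ) :
    fib ((n + 1) * k) =
      ∑ i ∈ range (k + 1), k.choose i * fib (n + 1) ^ i * fib n ^ (k - i) * fib i := by
  have hQ := fibMatrix_pow_succ ℕ n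
  simp only [Nat.cast_id] at hQ
  have hcomm : Commute (fib (n + 1) • fibMatrix ℕ) (fib n • 1) :=
    ((Commute.one_right _).smul_right _).smul_left _
  have hentry := fibMatrix_pow_apply_zero_one ℕ ((n + 1) * k)
  rw [Nat.cast_id] at hentry
  rw [← hentry, pow_mul, hQ, hcomm.add_pow, Matrix.sum_apply]
  refine sum_congr rfl fun i _ => ?_
  rw [smul_pow, smul_pow, one_pow, ← Nat.cast_comm, ← nsmul_eq_mul, smul_mul_smul_comm, mul_one,
    smul_smul]
  simp only [Matrix.smul_apply, fibMatrix_pow_apply_zero_one, Nat.cast_id, smul_eq_mul]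
  ring

theorem ZMod.natCast_prime_ne_zero {p q : ℕ} [Fact p.Prime] (hq : q.Prime) (hpq : p ≠ q) :
    (q : ZMod p) ≠ 0 := by
  rwa [Ne, ZMod.natCast_eq_zero_iff, Nat.prime_dvd_prime_iff_eq Fact.out hq]

theorem fib_prime_eq_five_pow {p : ℕ} [hp : Fact p.Prime] (hp2 : p ≠ 2) :
    (fib p : ZMod p) = 5 ^ (p / 2) := by
  set A : Matrix (Fin 2) (Fin 2) (ZMod p) := (2 : ZMod p) • fibMatrix (ZMod p) - 1
  have hA_sq : A ^ 2 = (5 : ZMod p) • 1 := by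
    ext i j
    fin_cases i <;> fin_cases j <;>
      simp [A, fibMatrix, sq, Matrix.mul_apply, Matrix.one_apply] <;> ring
  have hfrob : A ^ p = (2 : ZMod p) • fibMatrix (ZMod p) ^ p - 1 := by
    rw [sub_pow_char_of_commute p (Commute.one_right _), one_pow, smul_pow, ZMod.pow_card]
  have hA_pow : A ^ p = (5 : ZMod p) ^ (p / 2) • A := by
    calc A ^ p = A ^ (2 * (p / 2) + 1) := by
          rw [Nat.two_mul_div_two_add_one_of_odd (hp.out.odd_of_ne_two hp2)]
    _ = _ := by rw [pow_succ, pow_mul, hA_sq, smul_pow, one_pow, smul_mul_assoc, one_mul]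
  have h := congrFun (congrFun (hfrob.symm.trans hA_pow) 0) 1
  have hQ : fibMatrix (ZMod p) 0 1 = 1 := rfl
  simp only [A, Matrix.sub_apply, Matrix.smul_apply, fibMatrix_pow_apply_zero_one, hQ,
    Matrix.one_apply_ne zero_ne_one, smul_eq_mul, sub_zero, mul_one] at h
  have h2 : (2 : ZMod p) ≠ 0 := by exact_mod_cast ZMod.natCast_prime_ne_zero prime_two hp2
  exact mul_left_cancel₀ h2 (h.trans (mul_comm _ _))

theorem fib_prime_sq_eq_one {p : ℕ} [hp : Fact p.Prime] (hp2 : p ≠ 2) (hp5 : p ≠ 5) :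
    (fib p : ZMod p) ^ 2 = 1 := by
  have h5 : (5 : ZMod p) ≠ 0 := by exact_mod_cast ZMod.natCast_prime_ne_zero prime_five hp5
  have hodd := Nat.div_two_mul_two_add_one_of_odd (hp.out.odd_of_ne_two hp2)
  rw [fib_prime_eq_five_pow hp2, ← pow_mul, show p / 2 * 2 = p - 1 by omega,
    ZMod.pow_card_sub_one_eq_one h5]

theorem prime_dvd_fib_sub_one_mul_fib_add_one {p : ℕ} [hp : Fact p.Prime] (hp2 : p ≠ 2)
    (hp5 : p ≠ 5) : p ∣ fib (p - 1) * fib (p + 1) := by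
  have hcassini := Int.fib_succ_mul_fib_pred_sub_fib_sq p
  rw [Int.natAbs_natCast, (hp.out.odd_of_ne_two hp2).neg_one_pow, ← Nat.cast_pred hp.out.pos,
    ← Nat.cast_succ, Int.fib_natCast, Int.fib_natCast, Int.fib_natCast] at hcassini
  have h := congrArg (Int.cast : ℤ → ZMod p) hcassini
  push_cast at h
  rw [fib_prime_sq_eq_one hp2 hp5] at h
  rw [← ZMod.natCast_eq_zero_iff]
  push_cast
  linear_combination h

theorem padicValNat_add_of_pow_succ_dvd {p a b : ℕ} [Fact p.Prime] (ha : a ≠ 0)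
    (hb : p ^ (padicValNat p a + 1) ∣ b) : padicValNat p (a + b) = padicValNat p a := by
  have hab : a + b ≠ 0 := by omega
  refine le_antisymm ?_ ?_
  · by_contra! h
    have hdvd : p ^ (padicValNat p a + 1) ∣ a + b := (padicValNat_dvd_iff_le hab).2 h
    exact pow_succ_padicValNat_not_dvd ha ((Nat.dvd_add_left hb).1 hdvd)
  · rw [← padicValNat_dvd_iff_le hab]
    exact dvd_add pow_padicValNat_dvd ((pow_dvd_pow p (Nat.le_succ _)).trans hb)

theorem padicValNat_add_two_le {p i : ℕ} (hp : 3 ≤ p) (hi : 2 ≤ i) : padicValNat p i + 2 ≤ i := by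
  set v := padicValNat p i
  rcases Nat.eq_zero_or_pos v with hv | hv
  · omega
  have hbernoulli : 1 + v * 2 ≤ 3 ^ v := by
    exact_mod_cast one_add_mul_le_pow (show (-2 : ℤ) ≤ 2 by norm_num) v
  have hpow : p ^ v ≤ i := Nat.le_of_dvd (by omega) pow_padicValNat_dvd
  have h3 : 3 ^ v ≤ p ^ v := Nat.pow_le_pow_left hp v
  omega

theorem padicValNat_le_padicValNat_choose_add {p k i : ℕ} [Fact p.Prime] (hi : i ≠ 0)
    (hik : i ≤ k) : padicValNat p k ≤ padicValNat p (k.choose i) + padicValNat p i := by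
  obtain ⟨k, rfl⟩ := Nat.exists_eq_succ_of_ne_zero (by omega : k ≠ 0)
  obtain ⟨i, rfl⟩ := Nat.exists_eq_succ_of_ne_zero hi
  rw [← padicValNat.mul (Nat.choose_pos hik).ne' hi, ← Nat.add_one_mul_choose_eq,
    padicValNat.mul k.succ_ne_zero (Nat.choose_pos (by omega)).ne']
  exact Nat.le_add_right _ _

theorem pow_dvd_choose_mul_pow {p k a i : ℕ} [Fact p.Prime] (hp : 3 ≤ p) (ha : a ≠ 0)
    (hpa : p ∣ a) (hi : 2 ≤ i) (hik : i ≤ k) :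
    p ^ (padicValNat p k + padicValNat p a + 1) ∣ k.choose i * a ^ i := by
  have hchoose := padicValNat_le_padicValNat_choose_add (p := p) (by omega : i ≠ 0) hik
  have hsmall := padicValNat_add_two_le hp hi
  have ha1 : 1 ≤ padicValNat p a := one_le_padicValNat_of_dvd ha hpa
  rw [padicValNat_dvd_iff_le (mul_ne_zero (Nat.choose_pos hik).ne' (pow_ne_zero _ ha)),
    padicValNat.mul (Nat.choose_pos hik).ne' (pow_ne_zero _ ha), padicValNat.pow]
  nlinarith

theorem padicValNat_fib_mul {p n k : ℕ} [hp : Fact p.Prime] (hp2 : p ≠ 2) (hn : n ≠ 0)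
    (hk : k ≠ 0) (hpn : p ∣ fib n) :
    padicValNat p (fib (n * k)) = padicValNat p (fib n) + padicValNat p k := by
  obtain ⟨m, rfl⟩ : ∃ m, n = m + 1 := ⟨n - 1, by omega⟩
  obtain ⟨j, rfl⟩ : ∃ j, k = j + 1 := ⟨k - 1, by omega⟩
  have hp3 : 3 ≤ p := by have := hp.out.two_le; omega
  have hfib : fib (m + 1) ≠ 0 := (fib_pos.2 m.succ_pos).ne'
  have hpm : ¬ p ∣ fib m := fun h =>
    hp.out.one_lt.ne' (Nat.eq_one_of_dvd_coprimes (fib_coprime_fib_succ m) h hpn)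
  have hfm : fib m ≠ 0 := fun h => hpm (h ▸ dvd_zero p)
  rw [fib_succ_mul_eq_sum, sum_range_succ', sum_range_succ']
  simp only [fib_zero, mul_zero, add_zero, zero_add, choose_one_right, pow_one, fib_one, mul_one]
  have hlead : padicValNat p ((j + 1) * fib (m + 1) * fib m ^ (j + 1 - 1)) =
      padicValNat p (j + 1) + padicValNat p (fib (m + 1)) := by
    rw [padicValNat.mul (mul_ne_zero j.succ_ne_zero hfib) (pow_ne_zero _ hfm),
      padicValNat.mul j.succ_ne_zero hfib, padicValNat.pow, padicValNat.eq_zero_of_not_dvd hpm,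
      mul_zero, add_zero]
  have hlead_ne : (j + 1) * fib (m + 1) * fib m ^ (j + 1 - 1) ≠ 0 :=
    mul_ne_zero (mul_ne_zero j.succ_ne_zero hfib) (pow_ne_zero _ hfm)
  rw [add_comm, padicValNat_add_of_pow_succ_dvd hlead_ne, hlead, add_comm]
  rw [hlead]
  refine dvd_sum fun i hi => ?_
  have hi : i + 2 ≤ j + 1 := by simp only [mem_range] at hi; omega
  exact ((pow_dvd_choose_mul_pow hp3 hfib hpn (by omega) hi).mul_right _).mul_right _

theorem fibAlpha_pos_and_dvd {p m : ℕ} (hm : 0 < m) (hpm : p ∣ fib m) :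
    0 < fibAlpha p ∧ p ∣ fib (fibAlpha p) :=
  Nat.sInf_mem (s := {n | 0 < n ∧ p ∣ fib n}) ⟨m, hm, hpm⟩

theorem dvd_fib_iff_fibAlpha_dvd {p m : ℕ} (hm : 0 < m) (hpm : p ∣ fib m) (n : ℕ) :
    p ∣ fib n ↔ fibAlpha p ∣ n := by
  obtain ⟨hα, hpα⟩ := fibAlpha_pos_and_dvd hm hpm
  refine ⟨fun hpn => ?_, fun h => hpα.trans (fib_dvd _ _ h)⟩
  have hgcd_pos : 0 < Nat.gcd (fibAlpha p) n := Nat.gcd_pos_of_pos_left n hα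
  have hgcd_dvd : p ∣ fib (Nat.gcd (fibAlpha p) n) := by
    rw [fib_gcd]
    exact Nat.dvd_gcd hpα hpn
  have hle : fibAlpha p ≤ Nat.gcd (fibAlpha p) n := Nat.sInf_le ⟨hgcd_pos, hgcd_dvd⟩
  rw [← Nat.gcd_eq_left_iff_dvd]
  exact le_antisymm (Nat.le_of_dvd hα (Nat.gcd_dvd_left _ _)) hle

theorem exists_dvd_fib_not_dvd {p : ℕ} [hp : Fact p.Prime] (hp2 : p ≠ 2) (hp5 : p ≠ 5) :
    ∃ m, 0 < m ∧ p ∣ fib m ∧ ¬ p ∣ m := by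
  have h2 := hp.out.two_le
  rcases (Nat.Prime.dvd_mul hp.out).1 (prime_dvd_fib_sub_one_mul_fib_add_one hp2 hp5) with h | h
  · exact ⟨p - 1, by omega, h, Nat.not_dvd_of_pos_of_lt (by omega) (by omega)⟩
  · refine ⟨p + 1, by omega, h, fun hdvd => hp.out.one_lt.ne' ?_⟩
    exact Nat.dvd_one.1 ((Nat.dvd_add_right dvd_rfl).1 hdvd)

theorem nup_fib (p : ℕ) (hp : p.Prime) (hp2 : p ≠ 2) (hp5 : p ≠ 5)
    (n : ℕ) (hn : 1 ≤ n) :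
    (fibAlpha p ∣ n →
      padicValNat p (Nat.fib n) =
        padicValNat p n + padicValNat p (Nat.fib (fibAlpha p))) ∧
    (¬ fibAlpha p ∣ n → padicValNat p (Nat.fib n) = 0) := by
  have := Fact.mk hp
  obtain ⟨m, hm, hpm, hpm'⟩ := exists_dvd_fib_not_dvd hp2 hp5
  have hiff := dvd_fib_iff_fibAlpha_dvd hm hpm
  obtain ⟨hα, hpα⟩ := fibAlpha_pos_and_dvd hm hpm
  have hα_coprime : ¬ p ∣ fibAlpha p := fun h => hpm' (h.trans ((hiff m).1 hpm))
  refine ⟨?_, fun h => padicValNat.eq_zero_of_not_dvd (mt (hiff n).1 h)⟩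
  rintro ⟨k, rfl⟩
  have hk : k ≠ 0 := by rintro rfl; simp at hn
  rw [padicValNat_fib_mul hp2 hα.ne' hk hpα, padicValNat.mul hα.ne' hk,
    padicValNat.eq_zero_of_not_dvd hα_coprime]
  ring
end

section
/- Let p be an odd prime with p ≠ 5. Then α(p) divides p − (5/p), where (5/p) is the Legendre symbol; that is, as integers, α(p) divides p − legendreSym p 5. -/
/-!
In `A = 𝔽_p[X] ⧸ (X ^ 2 - X - 1)` the class `φ` of `X` satisfies `φ ^ (n + 1) = F (n + 1) φ + F n`,
and `1, φ` are linearly independent over `𝔽_p`. As `(2φ - 1) ^ 2 = 5`, the Frobenius and Euler's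
criterion give `2 φ ^ p - 1 = (5/p) (2φ - 1)`; comparing coefficients yields `F p ≡ (5/p)` and
`2 F (p - 1) ≡ 1 - (5/p)`, hence `p ∣ F (p - (5/p))` whichever of `0, 1, -1` the symbol is.
Since `gcd (F m) (F n) = F (gcd m n)`, every `n` with `p ∣ F n` is a multiple of `α(p)`.
-/

open Polynomial

theorem AdjoinRoot.eq_zero_of_of_mul_root_add_of_eq_zero {R : Type*} [CommRing R] [Nontrivial R]
    {f : R[X]} (hf : f.Monic) (hdeg : 2 ≤ f.natDegree) {a b : R}
    (h : of f a * root f + of f b = 0) : a = 0 ∧ b = 0 := by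
  have hmk : mk f (C a * X + C b) = 0 := by simpa using h
  have hlt : (C a * X + C b).degree < f.degree :=
    degree_linear_lt.trans_le (by rw [degree_eq_natDegree hf.ne_zero]; exact_mod_cast hdeg)
  have hzero : C a * X + C b = 0 := by
    rw [← (modByMonic_eq_self_iff hf).mpr hlt, ← modByMonicHom_mk hf, hmk, map_zero]
  exact ⟨by simpa using congrArg (coeff · 1) hzero, by simpa using congrArg (coeff · 0) hzero⟩

section GoldenRoot

variable {R : Type*} [CommRing R] {φ : R}

theorem pow_succ_eq_fib_mul_add_fib (hφ : φ ^ 2 = φ + 1) (n : ℕ) :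
    φ ^ (n + 1) = Nat.fib (n + 1) * φ + Nat.fib n := by
  induction n with
  | zero => simp
  | succ n ih =>
    rw [pow_succ, ih, Nat.fib_add_two]
    push_cast
    linear_combination (Nat.fib (n + 1) : R) * hφ

theorem two_mul_pow_char_sub_one (p : ℕ) [hp : Fact p.Prime] [CharP R p] (hp2 : p ≠ 2)
    (hφ : φ ^ 2 = φ + 1) : 2 * φ ^ p - 1 = legendreSym p 5 * (2 * φ - 1) := by
  have hodd : 2 * (p / 2) + 1 = p := Nat.two_mul_div_two_add_one_of_odd (hp.out.odd_of_ne_two hp2)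
  have heuler : ((legendreSym p 5 : ℤ) : R) = 5 ^ (p / 2) := by
    have h := congrArg (ZMod.castHom (dvd_refl p) R) (legendreSym.eq_pow p 5)
    rwa [map_intCast, map_pow, Int.cast_ofNat, map_ofNat] at h
  have htwo : (2 : R) ^ p = 2 := by simpa [frobenius_def] using map_ofNat (frobenius R p) 2
  calc 2 * φ ^ p - 1 = (2 * φ - 1) ^ p := by rw [sub_pow_char, mul_pow, one_pow, htwo]
    _ = ((2 * φ - 1) ^ 2) ^ (p / 2) * (2 * φ - 1) := by rw [← pow_mul, ← pow_succ, hodd]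
    _ = legendreSym p 5 * (2 * φ - 1) := by
      rw [show (2 * φ - 1) ^ 2 = 5 by linear_combination 4 * hφ, heuler, mul_comm]

end GoldenRoot

theorem fibAlpha_dvd_of_dvd_fib {p n : ℕ} (h : p ∣ Nat.fib n) : fibAlpha p ∣ n := by
  rcases n.eq_zero_or_pos with rfl | hn
  · exact dvd_zero _
  obtain ⟨hpos, hdvd⟩ : fibAlpha p ∈ {m | 0 < m ∧ p ∣ Nat.fib m} := Nat.sInf_mem ⟨n, hn, h⟩
  have hle : fibAlpha p ≤ (fibAlpha p).gcd n :=
    Nat.sInf_le ⟨Nat.gcd_pos_of_pos_left n hpos, by rw [Nat.fib_gcd]; exact Nat.dvd_gcd hdvd h⟩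
  exact Nat.gcd_eq_left_iff_dvd.mp ((Nat.le_of_dvd hpos (Nat.gcd_dvd_left _ _)).antisymm hle)

namespace ZMod

variable (p : ℕ) [hp : Fact p.Prime]

theorem two_ne_zero_of_ne_two (hp2 : p ≠ 2) : (2 : ZMod p) ≠ 0 :=
  Ring.two_ne_zero (by rwa [ringChar_zmod_n])

theorem fib_prime_eq_legendreSym_and_two_mul_fib_pred_eq (hp2 : p ≠ 2) :
    (Nat.fib p : ZMod p) = legendreSym p 5 ∧
      2 * (Nat.fib (p - 1) : ZMod p) = 1 - legendreSym p 5 := by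
  set f : (ZMod p)[X] := X ^ 2 - X - 1
  have hf : f.Monic := by simp only [f]; monicity!
  have hdeg : f.natDegree = 2 := by simp only [f]; compute_degree!
  have : CharP (AdjoinRoot f) p := charP_of_injective_ringHom
    (AdjoinRoot.of.injective_of_degree_ne_zero
      (by rw [degree_eq_natDegree hf.ne_zero, hdeg]; norm_num)) p
  have hroot : AdjoinRoot.root f ^ 2 = AdjoinRoot.root f + 1 := by
    have h := AdjoinRoot.eval₂_root f
    simp only [f, eval₂_sub, eval₂_X_pow, eval₂_X, eval₂_one] at h
    linear_combination h
  have hpow := pow_succ_eq_fib_mul_add_fib hroot (p - 1)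
  rw [Nat.sub_add_cancel hp.out.one_le] at hpow
  have hfrob := two_mul_pow_char_sub_one p hp2 hroot
  rw [hpow] at hfrob
  obtain ⟨ha, hb⟩ := AdjoinRoot.eq_zero_of_of_mul_root_add_of_eq_zero hf hdeg.ge
    (a := 2 * Nat.fib p - 2 * legendreSym p 5) (b := 2 * Nat.fib (p - 1) - 1 + legendreSym p 5)
    (by simp only [map_add, map_sub, map_mul, map_natCast, map_intCast, map_ofNat, map_one]
        linear_combination hfrob)
  exact ⟨mul_left_cancel₀ (two_ne_zero_of_ne_two p hp2) (by linear_combination ha),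
    by linear_combination hb⟩

theorem exists_natCast_eq_sub_legendreSym_and_dvd_fib (hp2 : p ≠ 2) :
    ∃ n : ℕ, (n : ℤ) = p - legendreSym p 5 ∧ p ∣ Nat.fib n := by
  obtain ⟨hfib, hpred⟩ := fib_prime_eq_legendreSym_and_two_mul_fib_pred_eq p hp2
  have h2 := two_ne_zero_of_ne_two p hp2
  simp_rw [← natCast_eq_zero_iff]
  obtain h | h | h : legendreSym p 5 = 0 ∨ legendreSym p 5 = 1 ∨ legendreSym p 5 = -1 := by
    simpa only [jacobiSym.legendreSym.to_jacobiSym] using jacobiSym.trichotomy 5 p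
  all_goals rw [h] at hfib hpred ⊢; push_cast at hfib hpred ⊢
  · exact ⟨p, rfl, hfib⟩
  · exact ⟨p - 1, by push_cast [hp.out.one_le]; ring, by simpa [h2] using hpred⟩
  · refine ⟨p + 1, rfl, ?_⟩
    have hsucc : 2 * (Nat.fib (p + 1) : ZMod p) = 0 := by
      rw [Nat.fib_add_one hp.out.ne_zero]
      push_cast
      linear_combination hpred + 2 * hfib
    simpa [h2] using hsucc

end ZMod

theorem alpha_dvd_sub_legendre_general (p : ℕ) [Fact p.Prime] (hp2 : p ≠ 2) :
    (fibAlpha p : ℤ) ∣ (p : ℤ) - legendreSym p 5 := by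
  obtain ⟨n, hn, hdvd⟩ := ZMod.exists_natCast_eq_sub_legendreSym_and_dvd_fib p hp2
  rw [← hn]
  exact_mod_cast fibAlpha_dvd_of_dvd_fib hdvd

theorem alpha_dvd_sub_legendre (p : ℕ) [Fact p.Prime] (hp2 : p ≠ 2) (hp5 : p ≠ 5) :
    (fibAlpha p : ℤ) ∣ (p : ℤ) - legendreSym p 5 :=
  alpha_dvd_sub_legendre_general p hp2
end

section
/- Let p be a prime with p ≡ 1 or 4 (mod 5). Then the Pisano period π(p) divides p − 1. -/
/-- The Pisano period of the Fibonacci sequence modulo `k`: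
the least positive `n` such that `F (m + n) ≡ F m (mod k)` for all `m`. -/
noncomputable def pisano (k : ℕ) : ℕ :=
  sInf {n | 0 < n ∧ ∀ m : ℕ, Nat.fib (m + n) ≡ Nat.fib m [MOD k]}

lemma binet {K : Type*} [CommRing K] (α β : K) (hs : α + β = 1) (hm : α * β = -1) :
    ∀ n : ℕ, (Nat.fib n : K) * (α - β) = α ^ n - β ^ n := by
  have hα2 : α ^ 2 = α + 1 := by linear_combination -hm + α * hs
  have hβ2 : β ^ 2 = β + 1 := by linear_combination -hm + β * hs
  intro n
  induction n using Nat.twoStepInduction with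
  | zero => simp
  | one => simp
  | more n ih1 ih2 =>

    rw [Nat.fib_add_two]
    push_cast
    linear_combination ih1 + ih2 - α ^ n * hα2 + β ^ n * hβ2

lemma pisano_dvd_of_period {k N : ℕ} (hN0 : 0 < N)
    (hN : ∀ m : ℕ, Nat.fib (m + N) ≡ Nat.fib m [MOD k]) : pisano k ∣ N := by
  have hne : {n | 0 < n ∧ ∀ m : ℕ, Nat.fib (m + n) ≡ Nat.fib m [MOD k]}.Nonempty :=
    ⟨N, hN0, hN⟩
  have hmem := Nat.sInf_mem hne
  set π := pisano k with hπdef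
  obtain ⟨hπ0, hπper⟩ := hmem
  have hmul : ∀ j m : ℕ, Nat.fib (m + j * π) ≡ Nat.fib m [MOD k] := by
    intro j
    induction j with
    | zero => intro m; simpa using Nat.ModEq.refl (Nat.fib m)
    | succ j ih =>
      intro m
      have h1 : Nat.fib (m + π + j * π) ≡ Nat.fib (m + π) [MOD k] := ih (m + π)
      have h2 : Nat.fib (m + π) ≡ Nat.fib m [MOD k] := hπper m
      have harg : m + (j + 1) * π = m + π + j * π := by ring
      rw [harg]
      exact h1.trans h2
  have hr : ∀ m : ℕ, Nat.fib (m + N % π) ≡ Nat.fib m [MOD k] := by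
    intro m
    have h1 : Nat.fib (m + N) ≡ Nat.fib m [MOD k] := hN m
    have h2 : Nat.fib (m + N % π + N / π * π) ≡ Nat.fib (m + N % π) [MOD k] :=
      hmul (N / π) (m + N % π)
    have harg : m + N % π + N / π * π = m + N := by
      rw [add_assoc]
      congr 1
      exact Nat.mod_add_div' N π
    rw [harg] at h2
    exact h2.symm.trans h1
  rcases Nat.eq_zero_or_pos (N % π) with h0 | hpos
  · exact Nat.dvd_of_mod_eq_zero h0
  · exfalso
    have hle : π ≤ N % π := Nat.sInf_le ⟨hpos, hr⟩
    have hlt : N % π < π := Nat.mod_lt N hπ0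
    omega

lemma five_is_square (p : ℕ) (hp : p.Prime) (h : p % 5 = 1 ∨ p % 5 = 4) :
    IsSquare (5 : ZMod p) := by
  have hp2 : p ≠ 2 := by rintro rfl; omega
  have hp5 : p ≠ 5 := by rintro rfl; omega
  have hcast : ((p : ℤ) : ZMod 5) = ((p % 5 : ℕ) : ZMod 5) := by
    rw [ZMod.natCast_mod]; push_cast; ring
  have hq5 : ((p : ℤ) : ZMod 5) ≠ 0 := by
    rw [hcast]
    rcases h with h | h <;> rw [h] <;> decide
  have hsq : IsSquare ((p : ℤ) : ZMod 5) := by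
    rw [hcast]
    rcases h with h | h <;> rw [h]
    · exact ⟨1, by decide⟩
    · exact ⟨2, by decide⟩
  haveI : Fact p.Prime := ⟨hp⟩
  haveI : Fact (Nat.Prime 5) := ⟨by norm_num⟩
  have hrec : legendreSym p 5 = legendreSym 5 p :=
    legendreSym.quadratic_reciprocity_one_mod_four (p := 5) (q := p) (by norm_num) hp2
  have h5p : legendreSym 5 p = 1 := (legendreSym.eq_one_iff 5 hq5).mpr hsq
  have hp5' : ((5 : ℤ) : ZMod p) ≠ 0 := by
    intro hc
    have hdvd : (p : ℤ) ∣ 5 := (ZMod.intCast_zmod_eq_zero_iff_dvd 5 p).mp hc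
    have hdvd' : p ∣ 5 := by exact_mod_cast hdvd
    exact hp5 ((Nat.prime_dvd_prime_iff_eq hp (by norm_num)).mp hdvd')
  have := (legendreSym.eq_one_iff p hp5').mp (hrec.trans h5p)
  simpa using this

lemma fib_p_sub_one (p : ℕ) (hp : p.Prime) (h : p % 5 = 1 ∨ p % 5 = 4) :
    ((Nat.fib (p - 1) : ZMod p) = 0) ∧ ((Nat.fib p : ZMod p) = 1) := by
  haveI : Fact p.Prime := ⟨hp⟩
  have hp2 : p ≠ 2 := by rintro rfl; omega
  have hp5 : p ≠ 5 := by rintro rfl; omega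
  have h2 : (2 : ZMod p) ≠ 0 := by
    intro hc
    have h2'' : ((2 : ℕ) : ZMod p) = 0 := by simpa using hc
    have h2' := (ZMod.natCast_eq_zero_iff 2 p).mp h2''
    exact hp2 ((Nat.prime_dvd_prime_iff_eq hp (by norm_num)).mp h2')
  obtain ⟨s, hs⟩ := five_is_square p hp h
  -- s * s = 5
  set α : ZMod p := (1 + s) / 2 with hα
  set β : ZMod p := (1 - s) / 2 with hβ
  have hsum : α + β = 1 := by
    rw [hα, hβ]
    field_simp
    ring
  have hmul : α * β = -1 := by
    rw [hα, hβ]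
    field_simp
    linear_combination hs
  have hdiff : α - β = s := by
    rw [hα, hβ]
    field_simp
    ring
  have hs0 : s ≠ 0 := by
    intro hc
    rw [hc, mul_zero] at hs
    have h5'' : ((5 : ℕ) : ZMod p) = 0 := by simpa using hs
    have h5' := (ZMod.natCast_eq_zero_iff 5 p).mp h5''
    exact hp5 ((Nat.prime_dvd_prime_iff_eq hp (by norm_num)).mp h5')
  have hα0 : α ≠ 0 := by
    intro hc
    rw [hc, zero_mul] at hmul
    exact one_ne_zero (neg_eq_zero.mp hmul.symm)
  have hβ0 : β ≠ 0 := by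
    intro hc
    rw [hc, mul_zero] at hmul
    exact one_ne_zero (neg_eq_zero.mp hmul.symm)
  have hαf : α ^ (p - 1) = 1 := ZMod.pow_card_sub_one_eq_one hα0
  have hβf : β ^ (p - 1) = 1 := ZMod.pow_card_sub_one_eq_one hβ0
  have hb := binet α β hsum hmul
  constructor
  · have := hb (p - 1)
    rw [hαf, hβf, sub_self, hdiff] at this
    exact (mul_eq_zero.mp this).resolve_right hs0
  · have hpeq : p - 1 + 1 = p := by omega
    have hbp := hb p
    rw [hdiff] at hbp
    have hαp : α ^ p = α := by
      have h' : α ^ p = α ^ (p - 1) * α := by rw [← pow_succ, hpeq]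
      rw [h', hαf, one_mul]
    have hβp : β ^ p = β := by
      have h' : β ^ p = β ^ (p - 1) * β := by rw [← pow_succ, hpeq]
      rw [h', hβf, one_mul]
    rw [hαp, hβp, hdiff] at hbp
    exact mul_right_cancel₀ hs0 (by rw [hbp, one_mul])

theorem pisano_dvd_sub_one (p : ℕ) (hp : p.Prime) (h : p % 5 = 1 ∨ p % 5 = 4) :
    pisano p ∣ p - 1 := by
  obtain ⟨h0, h1⟩ := fib_p_sub_one p hp h
  have hp1 : 1 < p := hp.one_lt
  have hperiod : ∀ m : ℕ, Nat.fib (m + (p - 1)) ≡ Nat.fib m [MOD p] := by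
    intro m
    rw [← ZMod.natCast_eq_natCast_iff]
    cases m with
    | zero => simpa using h0
    | succ m =>
      have harg : m + 1 + (p - 1) = m + (p - 1) + 1 := by omega
      have hpeq : p - 1 + 1 = p := by omega
      rw [harg, Nat.fib_add]
      push_cast
      rw [hpeq, h0, h1]
      ring
  exact pisano_dvd_of_period (by omega) hperiod
end

section
/- Let p be a prime with p ≡ 2 or 3 (mod 5). Then the Pisano period π(p) divides 2(p + 1). -/
/-!
If `φ` is a root of `X ^ 2 = X + 1` in a ring of characteristic `p`, then `s = 2φ - 1` satisfies
`s ^ 2 = 5`, so `s ^ p = 5 ^ (p / 2) * s = -s` whenever `5` is a non-residue mod `p`, which by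
quadratic reciprocity means `p ≡ ±2 (mod 5)`. Thus Frobenius swaps `φ` and `1 - φ`, so
`φ ^ (p + 1) = φ (1 - φ) = -1` and both roots satisfy `x ^ (2 (p + 1)) = 1`. The identity
`F n * (2φ - 1) = φ ^ n - (1 - φ) ^ n` then gives `F (2 (p + 1)) ≡ 0` and `F (2 (p + 1) + 1) ≡ 1`
mod `p`, and any such index is a multiple of the Pisano period.
-/

theorem fib_add_modEq_of_modEq {k N : ℕ} (h0 : Nat.fib N ≡ 0 [MOD k])
    (h1 : Nat.fib (N + 1) ≡ 1 [MOD k]) (m : ℕ) : Nat.fib (m + N) ≡ Nat.fib m [MOD k] := by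
  cases m with
  | zero => simpa using h0
  | succ m =>
    calc Nat.fib (m + 1 + N) = Nat.fib m * Nat.fib N + Nat.fib (m + 1) * Nat.fib (N + 1) := by
          rw [add_right_comm, Nat.fib_add]
      _ ≡ Nat.fib m * 0 + Nat.fib (m + 1) * 1 [MOD k] := (h0.mul_left _).add (h1.mul_left _)
      _ = Nat.fib (m + 1) := by ring

theorem pisano_dvd_of_forall_fib_add_modEq {k N : ℕ} (hN : 0 < N)
    (hper : ∀ m, Nat.fib (m + N) ≡ Nat.fib m [MOD k]) : pisano k ∣ N := by
  set d := pisano k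
  obtain ⟨hd, hdper⟩ : d ∈ {n | 0 < n ∧ ∀ m, Nat.fib (m + n) ≡ Nat.fib m [MOD k]} :=
    Nat.sInf_mem ⟨N, hN, hper⟩
  have hmul (j m : ℕ) : Nat.fib (m + j * d) ≡ Nat.fib m [MOD k] := by
    induction j generalizing m with
    | zero => simp [Nat.ModEq.refl]
    | succ j ih => rw [Nat.succ_mul, ← add_assoc]; exact (hdper _).trans (ih m)
  refine Nat.dvd_of_mod_eq_zero (Nat.eq_zero_of_not_pos fun hr =>
    (Nat.mod_lt N hd).not_ge (Nat.sInf_le ⟨hr, fun m => ?_⟩))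
  calc Nat.fib (m + N % d) ≡ Nat.fib (m + N % d + N / d * d) [MOD k] := (hmul _ _).symm
    _ = Nat.fib (m + N) := by rw [add_assoc, Nat.mod_add_div']
    _ ≡ Nat.fib m [MOD k] := hper m

theorem pisano_dvd_of_fib_modEq {k N : ℕ} (hN : 0 < N) (h0 : Nat.fib N ≡ 0 [MOD k])
    (h1 : Nat.fib (N + 1) ≡ 1 [MOD k]) : pisano k ∣ N :=
  pisano_dvd_of_forall_fib_add_modEq hN (fib_add_modEq_of_modEq h0 h1)

section GoldenRatio

variable {R : Type*} [CommRing R] {φ : R}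

theorem one_sub_sq_of_sq_eq_add_one (hφ : φ ^ 2 = φ + 1) : (1 - φ) ^ 2 = (1 - φ) + 1 := by
  linear_combination hφ

theorem natCast_fib_mul_two_mul_sub_one (hφ : φ ^ 2 = φ + 1) (n : ℕ) :
    (Nat.fib n : R) * (2 * φ - 1) = φ ^ n - (1 - φ) ^ n := by
  induction n using Nat.twoStepInduction with
  | zero => simp
  | one => rw [Nat.fib_one, Nat.cast_one, pow_one, pow_one]; ring
  | more n ih₀ ih₁ =>
    rw [Nat.fib_add_two, Nat.cast_add, pow_add, pow_add, hφ, one_sub_sq_of_sq_eq_add_one hφ]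
    linear_combination ih₀ + ih₁

theorem natCast_fib_eq_of_pow_eq_one (hφ : φ ^ 2 = φ + 1) (h5 : IsUnit (5 : R)) {N : ℕ}
    (hN : φ ^ N = 1) (hN' : (1 - φ) ^ N = 1) :
    (Nat.fib N : R) = 0 ∧ (Nat.fib (N + 1) : R) = 1 := by
  have hs : IsUnit (2 * φ - 1) := by
    rw [← isUnit_pow_iff two_ne_zero]
    convert h5 using 2
    linear_combination 4 * hφ
  constructor
  · exact hs.mul_left_eq_zero.mp <| by
      rw [natCast_fib_mul_two_mul_sub_one hφ, hN, hN', sub_self]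
  · exact hs.mul_left_inj.mp <| by
      rw [natCast_fib_mul_two_mul_sub_one hφ, pow_succ, pow_succ, hN, hN']
      ring

variable (p : ℕ) [Fact p.Prime] [CharP R p]

theorem pow_char_eq_one_sub (hp : p ≠ 2) (hφ : φ ^ 2 = φ + 1) (h5 : (5 : R) ^ (p / 2) = -1) :
    φ ^ p = 1 - φ := by
  have hp' : p = 2 * (p / 2) + 1 :=
    (Nat.two_mul_div_two_add_one_of_odd ((Fact.out : p.Prime).odd_of_ne_two hp)).symm
  have h2 : IsUnit (2 : R) := (CharP.isUnit_ofNat_iff Fact.out).mpr fun h =>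
    hp ((Nat.prime_dvd_prime_iff_eq Fact.out Nat.prime_two).mp h)
  have hs : (2 * φ - 1) ^ p = -(2 * φ - 1) := by
    rw [hp', pow_succ, pow_mul, show (2 * φ - 1) ^ 2 = 5 by linear_combination 4 * hφ, h5]
    ring
  have h2p : (2 : R) ^ p = 2 := by
    rw [← one_add_one_eq_two, add_pow_char, one_pow]
  rw [sub_pow_char, mul_pow, h2p, one_pow] at hs
  exact h2.mul_right_inj.mp (by linear_combination hs)

theorem pow_two_mul_char_add_one_eq_one (hp : p ≠ 2) (hφ : φ ^ 2 = φ + 1)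
    (h5 : (5 : R) ^ (p / 2) = -1) : φ ^ (2 * (p + 1)) = 1 := by
  have h : φ ^ (p + 1) = -1 := by
    rw [pow_succ, pow_char_eq_one_sub p hp hφ h5]
    linear_combination -hφ
  rw [mul_comm, pow_mul, h, neg_one_sq]

theorem fib_two_mul_char_add_one_modEq (hp : p ≠ 2) (hφ : φ ^ 2 = φ + 1)
    (h5 : (5 : R) ^ (p / 2) = -1) :
    Nat.fib (2 * (p + 1)) ≡ 0 [MOD p] ∧ Nat.fib (2 * (p + 1) + 1) ≡ 1 [MOD p] := by
  have hp2 : p / 2 ≠ 0 := by have := (Fact.out : p.Prime).two_le; omega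
  have h5_unit : IsUnit (5 : R) := (isUnit_pow_iff hp2).mp (h5 ▸ isUnit_one.neg)
  have hψ := one_sub_sq_of_sq_eq_add_one hφ
  obtain ⟨h0, h1⟩ := natCast_fib_eq_of_pow_eq_one hφ h5_unit
    (pow_two_mul_char_add_one_eq_one p hp hφ h5) (pow_two_mul_char_add_one_eq_one p hp hψ h5)
  exact ⟨(CharP.natCast_eq_natCast R p).mp (h0.trans Nat.cast_zero.symm),
    (CharP.natCast_eq_natCast R p).mp (h1.trans Nat.cast_one.symm)⟩

end GoldenRatio

namespace ZMod

variable {p : ℕ} [Fact p.Prime]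

theorem not_isSquare_five (hp : p ≠ 2) (h : p % 5 = 2 ∨ p % 5 = 3) : ¬IsSquare (5 : ZMod p) := by
  have : Fact (Nat.Prime 5) := ⟨Nat.prime_five⟩
  rw [← Nat.cast_ofNat, ← exists_sq_eq_prime_iff_of_mod_four_eq_one (by norm_num) hp,
    ← natCast_mod]
  rcases h with h | h <;> rw [h] <;> decide +revert

theorem pow_div_two_eq_neg_one_of_not_isSquare {a : ZMod p} (ha : ¬IsSquare a) :
    a ^ (p / 2) = -1 := by
  have ha0 : a ≠ 0 := by rintro rfl; exact ha .zero
  exact (pow_div_two_eq_neg_one_or_one p ha0).resolve_left (mt (euler_criterion p ha0).mpr ha)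

end ZMod

open Polynomial AdjoinRoot in
theorem pisano_dvd_two_mul_add_one (p : ℕ) (hp : p.Prime)
    (h : p % 5 = 2 ∨ p % 5 = 3) :
    pisano p ∣ 2 * (p + 1) := by
  obtain rfl | hp2 := eq_or_ne p 2
  · exact pisano_dvd_of_fib_modEq (by norm_num) (by decide) (by decide)
  have := Fact.mk hp
  let f : (ZMod p)[X] := X ^ 2 - X - 1
  have : Nontrivial (AdjoinRoot f) := AdjoinRoot.nontrivial f <| by
    rw [show f.degree = 2 by unfold f; compute_degree!]
    exact two_ne_zero
  have : CharP (AdjoinRoot f) p :=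
    charP_of_injective_algebraMap (algebraMap (ZMod p) _).injective p
  have hφ : root f ^ 2 = root f + 1 := by
    linear_combination (by simpa [f] using eval₂_root f : root f ^ 2 - root f - 1 = 0)
  have h5 : (5 : AdjoinRoot f) ^ (p / 2) = -1 := by
    simpa only [map_pow, map_ofNat, map_neg, map_one] using
      congrArg (algebraMap (ZMod p) (AdjoinRoot f))
        (ZMod.pow_div_two_eq_neg_one_of_not_isSquare (ZMod.not_isSquare_five hp2 h))
  obtain ⟨h0, h1⟩ := fib_two_mul_char_add_one_modEq p hp2 hφ h5
  exact pisano_dvd_of_fib_modEq (by positivity) h0 h1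
end

section
/- Let p be a prime with p ≡ 1 or 4 (mod 5). Then for all integers n ≥ 0, 0 ≤ i ≤ p − 1, and 0 ≤ j ≤ p − 2, one has ν_p(F_{p(pn+i)+j+1}) = ν_p(F_{pn + ((i+j) mod (p−1)) + 1}). -/
/-!
Let `p` be a prime with `p ∣ F_a`. From `F_{kp} ≡ p F_k F_{k+1}^{p-1} (mod F_k²)` one gets
`p^e ∣ F_{a p^{e-1}}` for all `e`, so for `M` prime to `p` the strong divisibility
`gcd(F_m, F_n) = F_{gcd(m, n)}` gives `ν_p(F_M) = ν_p(F_{gcd(M, a)})`.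
If `p ≡ ±1 (mod 5)`, quadratic reciprocity makes `5` a square mod `p`, so Binet's formula holds in
`ZMod p` with nonzero roots, and Fermat's little theorem gives `p ∣ F_{p-1}`. With `a = p - 1`, the
two indices of the theorem are prime to `p` and congruent mod `p - 1`, hence have the same gcd
with `p - 1`.
-/

open Nat

theorem ZMod.isSquare_five_of_mod_five {p : ℕ} [Fact p.Prime] (h : p % 5 = 1 ∨ p % 5 = 4) :
    IsSquare (5 : ZMod p) := by
  have : Fact (Nat.Prime 5) := ⟨by norm_num⟩
  have : IsSquare ((5 : ℕ) : ZMod p) := by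
    refine (ZMod.exists_sq_eq_prime_iff_of_mod_four_eq_one (p := 5) (q := p) (by norm_num)
      (by omega)).mp ?_
    rcases h with h | h <;> rw [← ZMod.natCast_mod, h]
    · exact ⟨1, by norm_num⟩
    · exact ⟨2, by norm_num⟩
  exact_mod_cast this

theorem cast_fib_mul_sub_eq_pow_sub_pow {R : Type*} [CommRing R] {a b : R} (hsum : a + b = 1)
    (hprod : a * b = -1) (n : ℕ) : (fib n : R) * (a - b) = a ^ n - b ^ n := by
  induction n using Nat.twoStepInduction with
  | zero => simp
  | one => simp
  | more n ih ih' =>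
    rw [fib_add_two, Nat.cast_add]
    linear_combination ih + ih' - a ^ n * (a * hsum - hprod) + b ^ n * (b * hsum - hprod)

theorem prime_dvd_fib_sub_one {p : ℕ} [hp : Fact p.Prime] (hp2 : p ≠ 2) (hp5 : p ≠ 5)
    (h5 : IsSquare (5 : ZMod p)) : p ∣ fib (p - 1) := by
  obtain ⟨s, hs⟩ := h5
  have cast_ne_zero {q : ℕ} (hq : q.Prime) (hqp : q ≠ p) : (q : ZMod p) ≠ 0 := by
    rw [Ne, ZMod.natCast_eq_zero_iff, Nat.prime_dvd_prime_iff_eq hp.out hq]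
    exact Ne.symm hqp
  have h2 : (2 : ZMod p) ≠ 0 := by exact_mod_cast cast_ne_zero Nat.prime_two hp2.symm
  have hs0 : s ≠ 0 := by
    rintro rfl
    rw [mul_zero] at hs
    exact cast_ne_zero (by norm_num : (5 : ℕ).Prime) hp5.symm (by exact_mod_cast hs)
  set a : ZMod p := (1 + s) / 2
  set b : ZMod p := (1 - s) / 2
  have hsum : a + b = 1 := by simp only [a, b]; field_simp; ring
  have hprod : a * b = -1 := by simp only [a, b]; field_simp; linear_combination hs
  have hdiff : a - b = s := by simp only [a, b]; field_simp; ring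
  have ha : a ≠ 0 := by rintro h; simp [h] at hprod
  have hb : b ≠ 0 := by rintro h; simp [h] at hprod
  have hbinet := cast_fib_mul_sub_eq_pow_sub_pow hsum hprod (p - 1)
  rw [hdiff, ZMod.pow_card_sub_one_eq_one ha, ZMod.pow_card_sub_one_eq_one hb, sub_self] at hbinet
  exact (ZMod.natCast_eq_zero_iff _ _).mp ((mul_eq_zero.mp hbinet).resolve_right hs0)

theorem cast_fib_add {R : Type*} [CommRing R] (m k : ℕ) :
    (fib (m + k) : R) = (fib (m + 1) - fib m) * fib k + fib m * fib (k + 1) := by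
  cases k with
  | zero => simp
  | succ k =>
    rw [← add_assoc, fib_add, fib_add_two]
    push_cast
    ring

theorem cast_fib_mul_succ_of_sq_eq_zero {R : Type*} [CommRing R] {k : ℕ}
    (hk : (fib k : R) ^ 2 = 0) (n : ℕ) :
    (fib (k * (n + 1)) : R) = (n + 1) * fib k * fib (k + 1) ^ n ∧
      (fib (k * (n + 1) + 1) : R) = fib (k + 1) ^ (n + 1) := by
  induction n with
  | zero => simp
  | succ n ih =>
    obtain ⟨h₁, h₂⟩ := ih
    have hidx : k * (n + 1 + 1) = k * (n + 1) + k := by ring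
    rw [hidx]
    constructor
    · rw [cast_fib_add, h₁, h₂]
      push_cast
      linear_combination (-(n + 1) * fib (k + 1) ^ n : R) * hk
    · rw [fib_add]
      push_cast
      rw [h₁, h₂]
      linear_combination ((n + 1) * fib (k + 1) ^ n : R) * hk

theorem pow_succ_dvd_fib_mul_pow {p a : ℕ} (ha : p ∣ fib a) (s : ℕ) :
    p ^ (s + 1) ∣ fib (a * p ^ s) := by
  induction s with
  | zero => simpa using ha
  | succ s ih =>
    rcases p with _ | q
    · simp
    set k := a * (q + 1) ^ s
    have hsq : (fib k : ZMod ((q + 1) ^ (s + 2))) ^ 2 = 0 := by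
      rw [← Nat.cast_pow, ZMod.natCast_eq_zero_iff]
      calc (q + 1) ^ (s + 2) ∣ ((q + 1) ^ (s + 1)) ^ 2 := by
            rw [← pow_mul]; exact pow_dvd_pow _ (by omega)
        _ ∣ fib k ^ 2 := pow_dvd_pow_of_dvd ih 2
    have hpk : ((q + 1 : ℕ) * fib k : ZMod ((q + 1) ^ (s + 2))) = 0 := by
      rw [← Nat.cast_mul, ZMod.natCast_eq_zero_iff, _root_.pow_succ']
      exact mul_dvd_mul_left _ ih
    rw [show a * (q + 1) ^ (s + 1) = k * (q + 1) by ring, ← ZMod.natCast_eq_zero_iff,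
      (cast_fib_mul_succ_of_sq_eq_zero hsq q).1]
    push_cast at hpk
    rw [hpk, zero_mul]

theorem padicValNat_fib_eq_padicValNat_fib_gcd {p a M : ℕ} [hp : Fact p.Prime] (ha : p ∣ fib a)
    (hM : ¬ p ∣ M) : padicValNat p (fib M) = padicValNat p (fib (M.gcd a)) := by
  have hM0 : M ≠ 0 := by rintro rfl; exact hM (dvd_zero p)
  have hfibM : fib M ≠ 0 := by simpa using hM0
  have hfibgcd : fib (M.gcd a) ≠ 0 := by simp [hM0]
  apply le_antisymm
  · set e := padicValNat p (fib M)
    have hlift : p ^ e ∣ fib (a * p ^ (e - 1)) :=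
      (pow_dvd_pow p (by omega)).trans (pow_succ_dvd_fib_mul_pow ha (e - 1))
    have hcop : Coprime (p ^ (e - 1)) M :=
      ((hp.out.coprime_iff_not_dvd.mpr hM).pow_left _)
    have : p ^ e ∣ fib (M.gcd a) := by
      rw [← hcop.gcd_mul_right_cancel_right, fib_gcd]
      exact Nat.dvd_gcd pow_padicValNat_dvd hlift
    exact (padicValNat_dvd_iff_le hfibgcd).mp this
  · exact (padicValNat_dvd_iff_le hfibM).mp
      (pow_padicValNat_dvd.trans (fib_dvd _ _ (Nat.gcd_dvd_left M a)))

theorem not_dvd_mul_add_add_one {p q r : ℕ} (hr : r + 1 < p) : ¬ p ∣ p * q + r + 1 := by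
  rw [add_assoc, Nat.dvd_add_right (dvd_mul_right p q)]
  exact Nat.not_dvd_of_pos_of_lt r.succ_pos hr

theorem nup_fib_digit_shift_general (p : ℕ) (hp : p.Prime) (h : p % 5 = 1 ∨ p % 5 = 4)
    (n i j : ℕ) (hj : j ≤ p - 2) :
    padicValNat p (Nat.fib (p * (p * n + i) + j + 1)) =
      padicValNat p (Nat.fib (p * n + (i + j) % (p - 1) + 1)) := by
  have := Fact.mk hp
  have hp_two_le := hp.two_le
  have hfib : p ∣ fib (p - 1) :=
    prime_dvd_fib_sub_one (by omega) (by omega) (ZMod.isSquare_five_of_mod_five h)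
  have hp1 : (p : ZMod (p - 1)) = 1 := by
    exact_mod_cast (ZMod.natCast_eq_natCast_iff _ _ _).mpr (Nat.modEq_sub hp.one_le)
  have hmod : p * (p * n + i) + j + 1 ≡ p * n + (i + j) % (p - 1) + 1 [MOD p - 1] := by
    rw [← ZMod.natCast_eq_natCast_iff]
    push_cast [ZMod.natCast_mod, hp1]
    ring
  have hr : (i + j) % (p - 1) < p - 1 := Nat.mod_lt _ (by omega)
  rw [padicValNat_fib_eq_padicValNat_fib_gcd hfib (not_dvd_mul_add_add_one (by omega)),
    padicValNat_fib_eq_padicValNat_fib_gcd hfib (not_dvd_mul_add_add_one (by omega)), hmod.gcd_eq]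

theorem nup_fib_digit_shift (p : ℕ) (hp : p.Prime) (h : p % 5 = 1 ∨ p % 5 = 4)
    (n i j : ℕ) (hi : i ≤ p - 1) (hj : j ≤ p - 2) :
    padicValNat p (Nat.fib (p * (p * n + i) + j + 1)) =
      padicValNat p (Nat.fib (p * n + (i + j) % (p - 1) + 1)) :=
  nup_fib_digit_shift_general p hp h n i j hj
end

section
/- Let p be a prime with p ≡ 13 or 17 (mod 20). Then α(p) divides (p + 1)/2. -/
open Polynomial

lemma ns3' : ¬ IsSquare ((3:ℤ) : ZMod 5) := by decide
lemma ns2' : ¬ IsSquare ((2:ℤ) : ZMod 5) := by decide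

/-- If `p ∣ fib n` with `n > 0`, then the rank of apparition divides `n`. -/
lemma fibAlpha_dvd {p n : ℕ} (hn : 0 < n) (hd : p ∣ Nat.fib n) : fibAlpha p ∣ n := by
  have hne : n ∈ {k | 0 < k ∧ p ∣ Nat.fib k} := ⟨hn, hd⟩
  have hmem : fibAlpha p ∈ {k | 0 < k ∧ p ∣ Nat.fib k} := Nat.sInf_mem ⟨n, hne⟩
  obtain ⟨hpos, hdvd⟩ := hmem
  have hg : p ∣ Nat.fib (Nat.gcd (fibAlpha p) n) := by
    rw [Nat.fib_gcd]; exact Nat.dvd_gcd hdvd hd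
  have hgpos : 0 < Nat.gcd (fibAlpha p) n := Nat.gcd_pos_of_pos_right _ hn
  have hle : fibAlpha p ≤ Nat.gcd (fibAlpha p) n := Nat.sInf_le ⟨hgpos, hg⟩
  have hge : Nat.gcd (fibAlpha p) n ≤ fibAlpha p :=
    Nat.le_of_dvd hpos (Nat.gcd_dvd_left _ _)
  have heq : Nat.gcd (fibAlpha p) n = fibAlpha p := le_antisymm hge hle
  exact heq ▸ Nat.gcd_dvd_right (fibAlpha p) n

lemma legendre_five (p : ℕ) [Fact p.Prime] (hp2 : p ≠ 2)
    (h : p % 20 = 13 ∨ p % 20 = 17) : legendreSym p 5 = -1 := by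
  have h5 : (5:ℕ).Prime := by norm_num
  haveI : Fact (5:ℕ).Prime := ⟨h5⟩
  rw [show (5:ℤ) = ((5:ℕ):ℤ) by norm_num,
    legendreSym.quadratic_reciprocity_one_mod_four (p := 5) (q := p) (by norm_num) hp2]
  rw [legendreSym.mod 5]
  rcases h with h | h
  · have : ((p:ℤ) % ((5:ℕ):ℤ)) = 3 := by push_cast; omega
    rw [this, legendreSym.eq_neg_one_iff 5]
    exact ns3'
  · have : ((p:ℤ) % ((5:ℕ):ℤ)) = 2 := by push_cast; omega
    rw [this, legendreSym.eq_neg_one_iff 5]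
    exact ns2'

lemma key_dvd_fib (p : ℕ) (hp : p.Prime) (h : p % 20 = 13 ∨ p % 20 = 17) :
    p ∣ Nat.fib ((p + 1) / 2) := by
  haveI : Fact p.Prime := ⟨hp⟩
  have hp13 : 13 ≤ p := by
    rcases h with h | h <;> omega
  have hodd : p % 2 = 1 := by omega
  have hp2 : p ≠ 2 := by omega
  haveI : Fact (2 < p) := ⟨by omega⟩
  -- 5 is a nonresidue mod p
  have hleg : legendreSym p 5 = -1 := legendre_five p hp2 h
  have h5' : (5 : ZMod p) ^ (p / 2) = -1 := by
    have he := (legendreSym.eq_pow p 5).symm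
    rw [hleg] at he
    push_cast at he
    exact he
  have h5ne : (5 : ZMod p) ≠ 0 := by
    rw [show (5:ZMod p) = ((5:ℕ):ZMod p) by push_cast; ring, Ne,
      ZMod.natCast_eq_zero_iff]
    intro hdvd
    have := (Nat.prime_dvd_prime_iff_eq hp (by norm_num)).mp hdvd
    omega
  -- X^2 - 5 is irreducible over ZMod p
  have hirr : Irreducible (X ^ 2 - C (5 : ZMod p)) := by
    apply X_pow_sub_C_irreducible_of_prime Nat.prime_two
    intro b hb
    have hbne : b ≠ 0 := by
      intro h0
      rw [h0] at hb
      simp at hb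
      exact h5ne hb.symm
    have h1 : (5:ZMod p) ^ (p / 2) = 1 := by
      rw [← hb, ← pow_mul, show 2 * (p / 2) = p - 1 by omega]
      exact ZMod.pow_card_sub_one_eq_one hbne
    rw [h5'] at h1
    exact ZMod.neg_one_ne_one h1
  haveI : Fact (Irreducible (X ^ 2 - C (5 : ZMod p))) := ⟨hirr⟩
  set R := AdjoinRoot (X ^ 2 - C (5 : ZMod p)) with hR
  have hinj : Function.Injective (algebraMap (ZMod p) R) :=
    (algebraMap (ZMod p) R).injective
  haveI : CharP R p := charP_of_injective_algebraMap hinj p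
  set r : R := AdjoinRoot.root _ with hr
  have hr2 : r ^ 2 = 5 := by
    have h0 := AdjoinRoot.eval₂_root (X ^ 2 - C (5 : ZMod p))
    simp only [eval₂_sub, eval₂_pow, eval₂_X, eval₂_C] at h0
    have h5map := map_ofNat (AdjoinRoot.of (X ^ 2 - C (5 : ZMod p))) 5
    rw [h5map] at h0
    linear_combination h0
  set a : R := 1 + r with ha
  set b : R := 1 - r with hb
  have ha2 : a ^ 2 = 2 * a + 4 := by rw [ha]; linear_combination hr2
  have hb2 : b ^ 2 = 2 * b + 4 := by rw [hb]; linear_combination hr2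
  have binet : ∀ n : ℕ, a ^ n - b ^ n = (Nat.fib n : R) * 2 ^ n * r := by
    intro n
    induction n using Nat.twoStepInduction with
    | zero => simp
    | one => rw [ha, hb]; simp [Nat.fib_one]; ring
    | more n ih1 ih2 =>
      rw [Nat.fib_add_two]
      push_cast
      linear_combination (a ^ n) * ha2 - (b ^ n) * hb2 + 2 * ih2 + 4 * ih1
  have h5R : (5 : R) ^ (p / 2) = -1 := by
    have hmap := congrArg (algebraMap (ZMod p) R) h5'
    simp only [map_pow, map_neg, map_one, map_ofNat] at hmap
    exact hmap
  have hrp : r ^ p = -r := by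
    have h1 : r ^ p = (r ^ 2) ^ (p / 2) * r := by
      rw [← pow_mul, ← pow_succ]
      congr 1
      omega
    rw [h1, hr2, h5R]; ring
  have hap : a ^ p = b := by
    rw [ha, hb, add_pow_char, one_pow, hrp]; ring
  have hbp : b ^ p = a := by
    have hb' : b = 1 + (-r) := by rw [hb]; ring
    rw [hb', ha, add_pow_char, one_pow, (Nat.odd_iff.mpr hodd).neg_pow, hrp]; ring
  set m := (p + 1) / 2 with hm
  have hm2 : 2 * m = p + 1 := by omega
  have hmodd : m % 2 = 1 := by omega
  have hba : b * a = -4 := by rw [ha, hb]; linear_combination -hr2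
  have hA : a ^ (2 * m) = -4 := by rw [hm2, pow_succ, hap, hba]
  have hB : b ^ (2 * m) = -4 := by
    rw [hm2, pow_succ, hbp]
    rw [mul_comm, hba]
  have h2z : (2 : ZMod p) ≠ 0 := by
    rw [show (2:ZMod p) = ((2:ℕ):ZMod p) by push_cast; ring, Ne,
      ZMod.natCast_eq_zero_iff]
    intro hdvd
    have := Nat.le_of_dvd (by norm_num) hdvd
    omega
  have h2Rne : (2 : R) ≠ 0 := fun h0 => h2z (hinj (by simp only [map_ofNat, map_zero]; exact h0))
  have h2R : (2 : R) ^ (p - 1) = 1 := by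
    have hmap := congrArg (algebraMap (ZMod p) R) (ZMod.pow_card_sub_one_eq_one h2z)
    simp only [map_pow, map_one, map_ofNat] at hmap
    exact hmap
  have h4m : (4 : R) ^ m = 4 := by
    rw [show (4:R) = 2^2 by norm_num, ← pow_mul, hm2,
      show p + 1 = 2 + (p - 1) by omega, pow_add, h2R]
    norm_num
  have habm : (a * b) ^ m = -4 := by
    rw [mul_comm, hba, (Nat.odd_iff.mpr hmodd).neg_pow, h4m]
  have hsq : (a ^ m - b ^ m) ^ 2 = 0 := by
    have hexp : (a ^ m - b ^ m) ^ 2 = a ^ (2*m) + b ^ (2*m) - 2 * (a*b) ^ m := by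
      rw [two_mul, pow_add, pow_add, mul_pow]; ring
    rw [hexp, hA, hB, habm]; ring
  have hzero : a ^ m - b ^ m = 0 := pow_eq_zero_iff (by norm_num) |>.mp hsq
  have hfib : (Nat.fib m : R) * 2 ^ m * r = 0 := by rw [← binet m, hzero]
  have hrne : r ≠ 0 := by
    intro h0
    have h50 : (5:R) = 0 := by rw [← hr2, h0]; ring
    exact h5ne (hinj (by simp only [map_ofNat, map_zero]; exact h50))
  have hfz : (Nat.fib m : R) = 0 := by
    rcases mul_eq_zero.mp hfib with h' | h'
    · rcases mul_eq_zero.mp h' with h'' | h''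
      · exact h''
      · exact absurd h'' (pow_ne_zero _ h2Rne)
    · exact absurd h' hrne
  have hfz' : (Nat.fib m : ZMod p) = 0 := by
    apply hinj
    simp only [map_natCast, map_zero]
    exact hfz
  exact (ZMod.natCast_eq_zero_iff _ p).mp hfz'

theorem alpha_dvd_half_succ (p : ℕ) (hp : p.Prime)
    (h : p % 20 = 13 ∨ p % 20 = 17) :
    fibAlpha p ∣ (p + 1) / 2 := by
  have hp13 : 13 ≤ p := by rcases h with h | h <;> omega
  exact fibAlpha_dvd (by omega) (key_dvd_fib p hp h)
end

section
/- Let p be a prime with p ≡ 13 or 17 (mod 20). Then for all integers n ≥ 0 and all i with (p+1)/2 ≤ i ≤ p − 2, one has ν_p(F_{pn+i+1}) = ν_p(F_{pn + (i mod (p+1)/2) + 1}). -/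
/-!
Put `k = (p + 1) / 2`; the two indices differ by `k` and neither is divisible by `p`.
Since `p ≡ 2, 3 mod 5`, quadratic reciprocity makes `5` a non-residue mod `p`, so in `𝔽_p(√5)`
the Frobenius swaps the roots `φ, ψ` of `X² - X - 1` and `φ ^ (p + 1) = φ ψ = -1`. As
`p ≡ 1 mod 4` this forces `ψ ^ k = φ ^ k`, i.e. `p ∣ F_k` by Binet's formula.

Once `p ∣ F_k`, for `p ∤ m` the valuation `ν_p(F_m)` only depends on `g = gcd(m, k)`: if `p ∣ F_g`
then `ν_p(F_m) = ν_p(F_g)` because `F_{jg} ≡ j F_g F_{g+1} ^ (j - 1) mod F_g ^ 2`, and otherwise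
`p ∤ F_m` since `gcd(F_m, F_k) = F_g`. Finally `gcd(m + k, k) = gcd(m, k)`.
-/

open Nat (fib)
open Polynomial

theorem fib_mul_sub_eq_pow_sub_pow {R : Type*} [CommRing R] {φ ψ : R}
    (hφ : φ ^ 2 = φ + 1) (hψ : ψ ^ 2 = ψ + 1) (n : ℕ) :
    (fib n : R) * (φ - ψ) = φ ^ n - ψ ^ n := by
  induction n using Nat.twoStepInduction with
  | zero => simp
  | one => simp
  | more n ih₀ ih₁ =>
    rw [Nat.fib_add_two]
    push_cast
    linear_combination ih₀ + ih₁ - φ ^ n * hφ + ψ ^ n * hψ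

theorem fib_half_eq_zero_of_pow_char_eq_neg {K : Type*} [Field K] {p : ℕ} [Fact p.Prime]
    [CharP K p] (hp : p % 4 = 1) {r : K} (hr : r ^ 2 = 5) (hr₀ : r ≠ 0) (hrp : r ^ p = -r) :
    (fib ((p + 1) / 2) : K) = 0 := by
  have h2 : (2 : K) ≠ 0 := Ring.two_ne_zero (by rw [ringChar.eq K p]; omega)
  have hφ : ((1 + r) / 2) ^ 2 = (1 + r) / 2 + 1 := by field_simp; linear_combination hr
  have hψ : ((1 - r) / 2) ^ 2 = (1 - r) / 2 + 1 := by field_simp; linear_combination hr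
  have hφψ : (1 - r) / 2 * ((1 + r) / 2) = -1 := by field_simp; linear_combination -hr
  have hsub : (1 + r) / 2 - (1 - r) / 2 = r := by field_simp; ring
  have h2p : (2 : K) ^ p = 2 := by simpa [frobenius_def] using map_ofNat (frobenius K p) 2
  have hφp : ((1 + r) / 2) ^ p = (1 - r) / 2 := by
    rw [div_pow, add_pow_char, one_pow, hrp, h2p, ← sub_eq_add_neg]
  set φ := (1 + r) / 2
  set ψ := (1 - r) / 2
  obtain ⟨q, rfl⟩ : ∃ q, p = 4 * q + 1 := ⟨p / 4, by omega⟩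
  rw [show (4 * q + 1 + 1) / 2 = 2 * q + 1 by omega]
  -- `ψ ^ k = φ ^ (p k)` and `p k = k + (p + 1) * 2q` for `k = 2q + 1`, while `φ ^ (p + 1) = -1`.
  have hψk : ψ ^ (2 * q + 1) = φ ^ (2 * q + 1) := by
    rw [← hφp, ← pow_mul, show (4 * q + 1) * (2 * q + 1) = (4 * q + 1 + 1) * (2 * q) + (2 * q + 1)
      by ring, pow_add, pow_mul, pow_succ, hφp, hφψ, pow_mul]
    simp
  have := fib_mul_sub_eq_pow_sub_pow hφ hψ (2 * q + 1)
  rw [hψk, sub_self, hsub] at this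
  exact (mul_eq_zero.mp this).resolve_right hr₀

theorem not_isSquare_five_zmod {p : ℕ} [Fact p.Prime] (hp : p ≠ 2)
    (h : p % 5 = 2 ∨ p % 5 = 3) : ¬IsSquare (5 : ZMod p) := by
  have h2 : ¬IsSquare ((2 : ℕ) : ZMod 5) := by decide
  have h3 : ¬IsSquare ((3 : ℕ) : ZMod 5) := by decide
  have : Fact (Nat.Prime 5) := ⟨by norm_num⟩
  have hrec := ZMod.exists_sq_eq_prime_iff_of_mod_four_eq_one (p := 5) (q := p) rfl hp
  rw [Nat.cast_ofNat] at hrec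
  rw [← hrec, ← ZMod.natCast_mod]
  rcases h with h | h <;> rw [h] <;> assumption

theorem prime_dvd_fib_half {p : ℕ} [Fact p.Prime] (hp : p % 4 = 1)
    (h5 : ¬IsSquare (5 : ZMod p)) : p ∣ fib ((p + 1) / 2) := by
  have : Fact (Irreducible (X ^ 2 - C (5 : ZMod p))) :=
    ⟨X_pow_sub_C_irreducible_of_prime Nat.prime_two fun b hb => h5 ⟨b, by rw [← hb, sq]⟩⟩
  let K := AdjoinRoot (X ^ 2 - C (5 : ZMod p))
  have : CharP K p := charP_of_injective_algebraMap (algebraMap (ZMod p) K).injective p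
  let r : K := AdjoinRoot.root _
  have hr : r ^ 2 = 5 := by
    have h0 := AdjoinRoot.eval₂_root (X ^ 2 - C (5 : ZMod p))
    rw [eval₂_sub, eval₂_pow, eval₂_X, eval₂_C, sub_eq_zero] at h0
    exact h0.trans (map_ofNat _ 5)
  have h50 : (5 : ZMod p) ≠ 0 := fun h0 => h5 ⟨0, by rw [h0, mul_zero]⟩
  have hr₀ : r ≠ 0 := by
    intro h0
    rw [h0, zero_pow two_ne_zero] at hr
    exact h50 ((algebraMap (ZMod p) K).injective (by rw [map_ofNat, map_zero]; exact hr.symm))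
  have heuler : (5 : ZMod p) ^ (p / 2) = -1 :=
    (ZMod.pow_div_two_eq_neg_one_or_one p h50).resolve_left
      fun h1 => h5 ((ZMod.euler_criterion p h50).mpr h1)
  -- Euler's criterion: `r ^ p = r * 5 ^ ((p - 1) / 2) = -r`.
  have hrp : r ^ p = -r := by
    have h5K : (5 : K) ^ (p / 2) = -1 := by
      simpa only [map_pow, map_neg, map_one, map_ofNat] using
        congrArg (algebraMap (ZMod p) K) heuler
    calc r ^ p = (r ^ 2) ^ (p / 2) * r := by rw [← pow_mul, ← pow_succ]; congr 1; omega
      _ = -r := by rw [hr, h5K, neg_one_mul]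
  rw [← ZMod.natCast_eq_zero_iff]
  apply (algebraMap (ZMod p) K).injective
  simpa using fib_half_eq_zero_of_pow_char_eq_neg hp hr hr₀ hrp

theorem fib_mul_cast_of_sq_eq_zero {R : Type*} [CommRing R] {a : ℕ} (ha : (fib a : R) ^ 2 = 0)
    (j : ℕ) : (fib ((j + 1) * a) : R) = (j + 1) * fib a * fib (a + 1) ^ j ∧
      (fib ((j + 1) * a + 1) : R) = fib (a + 1) ^ (j + 1) := by
  obtain rfl | ⟨b, rfl⟩ : a = 0 ∨ ∃ b, a = b + 1 := by rcases a with _ | b <;> simp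
  · simp
  have hprev : (fib b : R) = fib (b + 2) - fib (b + 1) := by
    rw [Nat.fib_add_two]; push_cast; ring
  induction j with
  | zero => simp
  | succ j ih =>
    have h₀ := Nat.fib_add ((j + 1) * (b + 1)) b
    have h₁ := Nat.fib_add ((j + 1) * (b + 1)) (b + 1)
    rw [show (j + 1) * (b + 1) + b + 1 = (j + 1 + 1) * (b + 1) by ring] at h₀
    rw [show (j + 1) * (b + 1) + (b + 1) + 1 = (j + 1 + 1) * (b + 1) + 1 by ring] at h₁
    rw [h₀, h₁]
    push_cast
    rw [ih.1, ih.2, hprev]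
    constructor
    · linear_combination (-((j : R) + 1) * fib (b + 1 + 1) ^ j) * ha
    · linear_combination (((j : R) + 1) * fib (b + 1 + 1) ^ j) * ha

theorem padicValNat_fib_mul_s13 {p a j : ℕ} [Fact p.Prime] (hpa : p ∣ fib a) (hpj : ¬p ∣ j) :
    padicValNat p (fib (j * a)) = padicValNat p (fib a) := by
  obtain rfl | ha := Nat.eq_zero_or_pos a
  · simp
  obtain ⟨j, rfl⟩ : ∃ j', j = j' + 1 := ⟨j - 1, by rcases j with _ | j <;> simp_all⟩
  set c := padicValNat p (fib a)
  have hFa : fib a ≠ 0 := (Nat.fib_pos.mpr ha).ne'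
  have hFja : fib ((j + 1) * a) ≠ 0 := (Nat.fib_pos.mpr (by positivity)).ne'
  have hc : 1 ≤ c := one_le_padicValNat_of_dvd hFa hpa
  refine le_antisymm ?_ ((padicValNat_dvd_iff_le hFja).mp
    (pow_padicValNat_dvd.trans (Nat.fib_dvd _ _ (dvd_mul_left a _))))
  by_contra! hlt
  have hdvd : p ^ (c + 1) ∣ fib ((j + 1) * a) := (padicValNat_dvd_iff_le hFja).mpr hlt
  -- Modulo `p ^ (c + 1)`, which divides `F_a ^ 2`, `F_{(j+1)a} ≡ (j + 1) F_a F_{a+1} ^ j`.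
  have hsq : (fib a : ZMod (p ^ (c + 1))) ^ 2 = 0 := by
    rw [← Nat.cast_pow, ZMod.natCast_eq_zero_iff, sq]
    exact (pow_dvd_pow p (by omega : c + 1 ≤ c + c)).trans
      (pow_add p c c ▸ mul_dvd_mul pow_padicValNat_dvd pow_padicValNat_dvd)
  have hcong := (fib_mul_cast_of_sq_eq_zero hsq j).1
  rw [(ZMod.natCast_eq_zero_iff _ _).mpr hdvd] at hcong
  have hdvd' : p ^ (c + 1) ∣ fib a * ((j + 1) * fib (a + 1) ^ j) := by
    rw [← ZMod.natCast_eq_zero_iff]; push_cast; linear_combination -hcong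
  have hcop : Nat.Coprime (p ^ (c + 1)) ((j + 1) * fib (a + 1) ^ j) :=
    Nat.Coprime.pow_left _ (Nat.Coprime.mul_right
      ((Nat.Prime.coprime_iff_not_dvd Fact.out).mpr hpj)
      (((Nat.fib_coprime_fib_succ a).coprime_dvd_left hpa).pow_right j))
  exact pow_succ_padicValNat_not_dvd hFa (hcop.dvd_of_dvd_mul_right hdvd')

theorem padicValNat_fib_eq_fib_gcd {p k m : ℕ} [Fact p.Prime] (hk : p ∣ fib k) (hm : ¬p ∣ m) :
    padicValNat p (fib m) = padicValNat p (fib (m.gcd k)) := by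
  by_cases hg : p ∣ fib (m.gcd k)
  · obtain ⟨j, hj⟩ := Nat.gcd_dvd_left m k
    have hpj : ¬p ∣ j := fun h => hm (hj ▸ dvd_mul_of_dvd_right h _)
    conv_lhs => rw [hj, mul_comm]
    exact padicValNat_fib_mul_s13 hg hpj
  · have hpm : ¬p ∣ fib m := fun h => hg (Nat.fib_gcd m k ▸ Nat.dvd_gcd h hk)
    rw [padicValNat.eq_zero_of_not_dvd hpm, padicValNat.eq_zero_of_not_dvd hg]

theorem padicValNat_fib_add_of_dvd {p k m : ℕ} [Fact p.Prime] (hk : p ∣ fib k) (hm : ¬p ∣ m)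
    (hmk : ¬p ∣ m + k) : padicValNat p (fib (m + k)) = padicValNat p (fib m) := by
  rw [padicValNat_fib_eq_fib_gcd hk hm, padicValNat_fib_eq_fib_gcd hk hmk, Nat.gcd_add_self_left]

theorem nup_fib_reduce_digit (p : ℕ) (hp : p.Prime)
    (h : p % 20 = 13 ∨ p % 20 = 17) (n i : ℕ)
    (hi1 : (p + 1) / 2 ≤ i) (hi2 : i ≤ p - 2) :
    padicValNat p (Nat.fib (p * n + i + 1)) =
      padicValNat p (Nat.fib (p * n + i % ((p + 1) / 2) + 1)) := by
  have : Fact p.Prime := ⟨hp⟩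
  set k := (p + 1) / 2
  have hk : p ∣ fib k :=
    prime_dvd_fib_half (by omega) (not_isSquare_five_zmod (by omega) (by omega))
  have hmod : i % k = i - k := by
    rw [Nat.mod_eq_sub_mod hi1, Nat.mod_eq_of_lt (by omega)]
  have hsplit : p * n + i + 1 = p * n + (i - k) + 1 + k := by omega
  rw [hmod, hsplit]
  apply padicValNat_fib_add_of_dvd hk
  · rw [add_assoc, Nat.dvd_add_right (dvd_mul_right p n)]
    exact Nat.not_dvd_of_pos_of_lt (by omega) (by omega)
  · rw [← hsplit, add_assoc, Nat.dvd_add_right (dvd_mul_right p n)]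
    exact Nat.not_dvd_of_pos_of_lt (by omega) (by omega)
end

section
/- Let p be a prime with p ≡ 13 or 17 (mod 20). Then for all integers n ≥ 0, 0 ≤ i ≤ p − 1, and 0 ≤ j ≤ (p−1)/2, one has ν_p(F_{p(pn+i)+j+1}) = ν_p(F_{pn + ((i − j + (p−3)/2) mod (p+1)/2) + 1}). -/
/-!
Since `p ≡ 1 (mod 4)` and `5` is not a square mod `p`, the Frobenius of `𝔽_p` swaps the two roots
`φ` and `1 - φ` of `X² - X - 1`, so `φ ^ (p + 1) = φ (1 - φ) = -1`. With `q = (p + 1) / 2` odd,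
this gives `φ ^ q = (1 - φ) ^ q`, and Binet's formula yields `p ∣ F_q`.

Writing `F_{cm} = F_m · c'` with `c' ≡ c F_{m+1}^(c-1) (mod F_m)` shows `ν_p(F_{cm}) = ν_p(F_m)`
whenever `p ∣ F_m` and `p ∤ c`. Together with `gcd(F_k, F_q) = F_{gcd(k, q)}` this makes
`ν_p(F_k)`, for `p ∤ k`, a function of `gcd(k, q)` alone. The two indices of the theorem are prime
to `p` and their sum is a multiple of `q`, so they have the same gcd with `q`.
-/

open Polynomial

theorem ZMod.not_isSquare_five_s15 {p : ℕ} [Fact p.Prime] (hp2 : p ≠ 2)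
    (hp : p % 5 = 2 ∨ p % 5 = 3) : ¬IsSquare (5 : ZMod p) := by
  have := @ZMod.exists_sq_eq_prime_iff_of_mod_four_eq_one 5 p ⟨by norm_num⟩ _ (by norm_num) hp2
  rw [Nat.cast_ofNat] at this
  rw [← this, ← ZMod.natCast_mod]
  rcases hp with h | h <;> simp only [h] <;> decide

section CharP

variable {K : Type*} {p : ℕ} [Fact p.Prime]

theorem pow_char_eq_neg_of_sq_eq_of_not_isSquare [CommRing K] [CharP K p] (hp : p ≠ 2)
    {a : ZMod p} (ha : ¬IsSquare a) {s : K} (hs : s ^ 2 = ZMod.castHom (dvd_refl p) K a) :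
    s ^ p = -s := by
  have hodd : p = 2 * (p / 2) + 1 := by
    have := (Fact.out : p.Prime).eq_two_or_odd; omega
  have ha0 : a ≠ 0 := by rintro rfl; exact ha ⟨0, by simp⟩
  have heuler : a ^ (p / 2) = -1 :=
    (ZMod.pow_div_two_eq_neg_one_or_one p ha0).resolve_left
      fun h => ha ((ZMod.euler_criterion p ha0).mpr h)
  calc s ^ p = (s ^ 2) ^ (p / 2) * s := by rw [← pow_mul, ← pow_succ, ← hodd]
    _ = -s := by rw [hs, ← map_pow, heuler, map_neg, map_one, neg_one_mul]

theorem pow_char_eq_one_sub_of_sq_eq_add_one [Field K] [CharP K p] (hp : p ≠ 2)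
    (h5 : ¬IsSquare (5 : ZMod p)) {x : K} (hx : x ^ 2 = x + 1) : x ^ p = 1 - x := by
  have hs : (2 * x - 1) ^ 2 = ZMod.castHom (dvd_refl p) K 5 := by
    rw [map_ofNat]
    linear_combination 4 * hx
  have hfrob := pow_char_eq_neg_of_sq_eq_of_not_isSquare hp h5 hs
  have h2p : (2 : K) ^ p = 2 := by
    rw [← map_ofNat (ZMod.castHom (dvd_refl p) K) 2, ← map_pow, ZMod.pow_card]
  have h2 : (2 : K) ≠ 0 := by
    exact_mod_cast CharP.cast_ne_zero_of_ne_of_prime K Nat.prime_two hp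
  rw [sub_pow_char, one_pow, mul_pow, h2p] at hfrob
  exact mul_left_cancel₀ h2 (by linear_combination hfrob)

end CharP

theorem sub_mul_fib_eq_pow_sub_pow {R : Type*} [CommRing R] {x y : R} (hsum : x + y = 1)
    (hprod : x * y = -1) (n : ℕ) : (x - y) * Nat.fib n = x ^ n - y ^ n := by
  induction n using Nat.twoStepInduction with
  | zero => simp
  | one => simp
  | more n ih0 ih1 =>
    push_cast [Nat.fib_add_two]
    linear_combination ih0 + ih1 - (x ^ (n + 1) - y ^ (n + 1)) * hsum + (x ^ n - y ^ n) * hprod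

theorem exists_sq_eq_add_one (K : Type*) [Field K] [IsAlgClosed K] : ∃ x : K, x ^ 2 = x + 1 := by
  obtain ⟨x, hx⟩ := IsAlgClosed.exists_root (X ^ 2 - X - 1 : K[X]) (by
    rw [show (X ^ 2 - X - 1 : K[X]).degree = 2 by compute_degree!]; decide)
  exact ⟨x, by simpa [sub_sub, sub_eq_zero] using hx⟩

theorem dvd_fib_succ_div_two {p : ℕ} [Fact p.Prime] (hp4 : p % 4 = 1)
    (h5 : ¬IsSquare (5 : ZMod p)) : p ∣ Nat.fib ((p + 1) / 2) := by
  set K := AlgebraicClosure (ZMod p)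
  set q := (p + 1) / 2
  obtain ⟨x, hx⟩ := exists_sq_eq_add_one K
  have hfrob : x ^ p = 1 - x := pow_char_eq_one_sub_of_sq_eq_add_one (by omega) h5 hx
  have hprod : x * (1 - x) = -1 := by linear_combination -hx
  have hx0 : x ≠ 0 := left_ne_zero_of_mul (by rw [hprod]; exact neg_ne_zero.mpr one_ne_zero)
  have hpow : (1 - x) ^ q = x ^ q := by
    refine mul_left_cancel₀ (pow_ne_zero q hx0) ?_
    calc x ^ q * (1 - x) ^ q = (-1) ^ q := by rw [← mul_pow, hprod]
      _ = -1 := Odd.neg_one_pow (by rw [Nat.odd_iff]; omega)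
      _ = x ^ p * x := by rw [hfrob, mul_comm, hprod]
      _ = x ^ q * x ^ q := by rw [← pow_succ, ← pow_add]; congr 1; omega
  have hbinet := sub_mul_fib_eq_pow_sub_pow (add_sub_cancel x 1) hprod q
  rw [hpow, sub_self] at hbinet
  have hp5 : p ≠ 5 := by rintro rfl; exact h5 ⟨0, by simpa using ZMod.natCast_self 5⟩
  have hsqrt5 : x - (1 - x) ≠ 0 := by
    intro h0
    have h5K : (5 : K) = 0 := by linear_combination -4 * hx + (2 * x - 1) * h0
    exact CharP.cast_ne_zero_of_ne_of_prime K (by norm_num) hp5 (by exact_mod_cast h5K)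
  exact (CharP.cast_eq_zero_iff K p _).mp ((mul_eq_zero.mp hbinet).resolve_left hsqrt5)

theorem fib_mul_add_one_modEq (m k : ℕ) :
    (Nat.fib (k * m + 1) : ℤ) ≡ Nat.fib (m + 1) ^ k [ZMOD Nat.fib m] := by
  induction k with
  | zero => simp [Int.ModEq.refl]
  | succ k ih =>
    rw [Int.modEq_iff_dvd] at ih ⊢
    obtain ⟨u, hu⟩ := ih
    refine ⟨u * Nat.fib (m + 1) - Nat.fib (k * m), ?_⟩
    rw [add_one_mul, Nat.fib_add]
    push_cast
    linear_combination (Nat.fib (m + 1) : ℤ) * hu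

theorem fib_succ_mul_modEq (m k : ℕ) :
    (Nat.fib ((k + 1) * m) : ℤ) ≡ (k + 1) * Nat.fib m * Nat.fib (m + 1) ^ k
      [ZMOD Nat.fib m ^ 2] := by
  induction k with
  | zero => simp [Int.ModEq.refl]
  | succ k ih =>
    obtain _ | m := m
    · simp [Int.ModEq.refl]
    rw [Int.modEq_iff_dvd] at ih ⊢
    obtain ⟨t, ht⟩ := ih
    obtain ⟨u, hu⟩ := (fib_mul_add_one_modEq (m + 1) (k + 1)).dvd
    have hA : (Nat.fib (m + 2) : ℤ) = Nat.fib m + Nat.fib (m + 1) := by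
      exact_mod_cast Nat.fib_add_two
    refine ⟨t * Nat.fib m + u + (k + 1) * Nat.fib (m + 2) ^ k, ?_⟩
    rw [show (k + 1 + 1) * (m + 1) = (k + 1) * (m + 1) + m + 1 by ring,
      Nat.fib_add ((k + 1) * (m + 1)) m]
    push_cast
    linear_combination (Nat.fib m : ℤ) * ht + (Nat.fib (m + 1) : ℤ) * hu +
      (k + 1) * Nat.fib (m + 1) * Nat.fib (m + 2) ^ k * hA

theorem Nat.gcd_eq_gcd_of_dvd_add {a b q : ℕ} (h : q ∣ a + b) : a.gcd q = b.gcd q :=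
  Nat.dvd_antisymm
    (Nat.dvd_gcd ((Nat.dvd_add_right (Nat.gcd_dvd_left a q)).mp ((Nat.gcd_dvd_right a q).trans h))
      (Nat.gcd_dvd_right a q))
    (Nat.dvd_gcd ((Nat.dvd_add_left (Nat.gcd_dvd_left b q)).mp ((Nat.gcd_dvd_right b q).trans h))
      (Nat.gcd_dvd_right b q))

section padicVal

variable {p : ℕ} [Fact p.Prime]

theorem padicValNat_fib_mul_s15 {m k : ℕ} (hm : p ∣ Nat.fib m) (hk : ¬p ∣ k) :
    padicValNat p (Nat.fib (k * m)) = padicValNat p (Nat.fib m) := by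
  have hp := (Fact.out : p.Prime)
  obtain ⟨k, rfl⟩ : ∃ k', k = k' + 1 :=
    Nat.exists_eq_succ_of_ne_zero (by rintro rfl; simp at hk)
  rcases eq_or_ne m 0 with rfl | hm0
  · simp
  have hB : (Nat.fib m : ℤ) ≠ 0 := by exact_mod_cast (Nat.fib_pos.mpr (by omega)).ne'
  obtain ⟨w, hw⟩ := (fib_succ_mul_modEq m k).dvd
  set c : ℤ := (k + 1) * Nat.fib (m + 1) ^ k - Nat.fib m * w
  have hfac : (Nat.fib ((k + 1) * m) : ℤ) = Nat.fib m * c := by linear_combination -hw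
  have hc : ¬(p : ℤ) ∣ c := by
    intro hpc
    have hpB : (p : ℤ) ∣ Nat.fib m := Int.natCast_dvd_natCast.mpr hm
    have h1 : (p : ℤ) ∣ ((k + 1) * Nat.fib (m + 1) ^ k : ℕ) := by
      push_cast
      simpa [c] using dvd_add hpc (dvd_mul_of_dvd_left hpB w)
    rcases hp.dvd_mul.mp (Int.natCast_dvd_natCast.mp h1) with h | h
    · exact hk h
    · exact hp.one_lt.ne' (Nat.eq_one_of_dvd_coprimes (Nat.fib_coprime_fib_succ m) hm
        (hp.dvd_of_dvd_pow h))
  rw [← padicValInt.of_nat, ← padicValInt.of_nat, hfac, padicValInt.mul hB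
    (fun h0 => hc (by rw [h0]; exact dvd_zero _)), padicValInt.eq_zero_of_not_dvd hc, add_zero]

theorem padicValNat_fib_eq_fib_gcd_s15 {q k : ℕ} (hq : p ∣ Nat.fib q) (hk : ¬p ∣ k) :
    padicValNat p (Nat.fib k) = padicValNat p (Nat.fib (k.gcd q)) := by
  by_cases hg : p ∣ Nat.fib (k.gcd q)
  · have hdvd := Nat.gcd_dvd_left k q
    conv_lhs => rw [← Nat.div_mul_cancel hdvd]
    exact padicValNat_fib_mul_s15 hg fun h => hk (h.trans (Nat.div_dvd_of_dvd hdvd))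
  · have hfk : ¬p ∣ Nat.fib k := fun h => hg (by rw [Nat.fib_gcd]; exact Nat.dvd_gcd h hq)
    rw [padicValNat.eq_zero_of_not_dvd hfk, padicValNat.eq_zero_of_not_dvd hg]

theorem padicValNat_fib_eq_of_dvd_add {q k l : ℕ} (hq : p ∣ Nat.fib q) (hkl : q ∣ k + l)
    (hk : ¬p ∣ k) (hl : ¬p ∣ l) :
    padicValNat p (Nat.fib k) = padicValNat p (Nat.fib l) := by
  rw [padicValNat_fib_eq_fib_gcd_s15 hq hk, padicValNat_fib_eq_fib_gcd_s15 hq hl,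
    Nat.gcd_eq_gcd_of_dvd_add hkl]

end padicVal

theorem nup_fib_digit_shift_13_17_general (p : ℕ) (hp : p.Prime)
    (h : p % 20 = 13 ∨ p % 20 = 17) (n i j : ℕ)
    (hj : j ≤ (p - 1) / 2) :
    padicValNat p (Nat.fib (p * (p * n + i) + j + 1)) =
      padicValNat p
        (Nat.fib (p * n +
          (((i : ℤ) - (j : ℤ) + (((p - 3) / 2 : ℕ) : ℤ)) %
            ((((p + 1) / 2 : ℕ) : ℤ))).toNat + 1)) := by
  have : Fact p.Prime := ⟨hp⟩
  have h5 : ¬IsSquare (5 : ZMod p) := ZMod.not_isSquare_five_s15 (by omega) (by omega)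
  set q := (p + 1) / 2 with hq
  set x : ℤ := (i : ℤ) - j + ((p - 3) / 2 : ℕ)
  have hx : 0 ≤ x % q := Int.emod_nonneg _ (by omega)
  have hxlt : x % q < q := Int.emod_lt_of_pos _ (by omega)
  have not_dvd_mul_add : ∀ a b, 0 < b → b < p → ¬p ∣ p * a + b := fun a b hb hbp =>
    (Nat.dvd_add_right (dvd_mul_right p a)).not.mpr (Nat.not_dvd_of_pos_of_lt hb hbp)
  apply padicValNat_fib_eq_of_dvd_add (dvd_fib_succ_div_two (by omega) h5)
  · -- as `p ≡ -1 (mod q)`, the indices are `≡ n - i + j + 1` and `≡ -(n - i + j + 1)` mod `q`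
    have hpq : (p : ℤ) = 2 * q - 1 := by omega
    have hxq : x = i - j + (q - 2) := by omega
    clear_value q x
    rw [← hq, ← Int.natCast_dvd_natCast]
    refine ⟨4 * q * n - 2 * n + 2 * i + 1 - x / q, ?_⟩
    push_cast [Int.toNat_of_nonneg hx]
    rw [Int.emod_def, hpq]
    linear_combination hxq
  · rw [add_assoc]
    exact not_dvd_mul_add _ _ (by omega) (by omega)
  · rw [add_assoc]
    exact not_dvd_mul_add _ _ (by omega) (by omega)

theorem nup_fib_digit_shift_13_17 (p : ℕ) (hp : p.Prime)
    (h : p % 20 = 13 ∨ p % 20 = 17) (n i j : ℕ)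
    (hi : i ≤ p - 1) (hj : j ≤ (p - 1) / 2) :
    padicValNat p (Nat.fib (p * (p * n + i) + j + 1)) =
      padicValNat p
        (Nat.fib (p * n +
          (((i : ℤ) - (j : ℤ) + (((p - 3) / 2 : ℕ) : ℤ)) %
            ((((p + 1) / 2 : ℕ) : ℤ))).toNat + 1)) :=
  nup_fib_digit_shift_13_17_general p hp h n i j hj
end
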